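/- arXiv:2405.17982 — 8 statements merged into one kernel-verified Lean document; each statement's English description precedes it below -/
import Mathlib

section
/- Let A be a finite set with |A| ≥ 2. Then the semiring ℤ^A_pos ∪ {-∞} is generated as a semiring by its unit group ℤ^A_0: every element F of ℤ^A_pos is a finite max of elements of ℤ^A_0. Concretely, for any F ∈ ℤ^A_pos there exist F₁, F₂ ∈ ℤ^A_0 with F = F₁ ⊕ F₂ (pointwise max). -/
theorem stmt4 {A : Type} [Fintype A] (hA : 2 ≤ Fintype.card A)
    (F : A → ℤ) (hF : 0 ≤ ∑ a, F a) :
    ∃ F₁ F₂ : A → ℤ, ∑ a, F₁ a = 0 ∧ ∑ a, F₂ a = 0 ∧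
      ∀ a, F a = max (F₁ a) (F₂ a) := by
  classical
  obtain ⟨a₀, a₁, hne⟩ := Fintype.exists_pair_of_one_lt_card hA
  set S := ∑ a, F a with hS
  refine ⟨Function.update F a₀ (F a₀ - S), Function.update F a₁ (F a₁ - S), ?_, ?_, ?_⟩
  · rw [Finset.sum_update_of_mem (Finset.mem_univ a₀)]
    have : ∑ a ∈ Finset.univ \ {a₀}, F a = S - F a₀ := by
      rw [hS, Finset.sum_sdiff_eq_sub (by simp), Finset.sum_singleton]
    omega
  · rw [Finset.sum_update_of_mem (Finset.mem_univ a₁)]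
    have : ∑ a ∈ Finset.univ \ {a₁}, F a = S - F a₁ := by
      rw [hS, Finset.sum_sdiff_eq_sub (by simp), Finset.sum_singleton]
    omega
  · intro a
    rcases eq_or_ne a a₀ with rfl | h0
    · rw [Function.update_self, Function.update_of_ne hne]
      omega
    · rw [Function.update_of_ne h0]
      rcases eq_or_ne a a₁ with rfl | h1
      · rw [Function.update_self]; omega
      · rw [Function.update_of_ne h1]; omega
end

section
/- Let d ∈ ℝⁿ be nonzero, 0 < ε < 1, and U(ρ,ε) = { p ∈ ℝⁿ \ {0} : (d·p)/(‖d‖‖p‖) > ε }. Let δ = ‖d‖·√(1−ε²). Then U(ρ,ε) equals the set of positive scalar multiples of points of the open ball B(d,δ) = { p : ‖p − d‖ < δ }; that is, U(ρ,ε) = ℝ_{>0}·B(d,δ). -/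
/-- The standard inner product on ℝⁿ. -/
def dot {n : ℕ} (x y : Fin n → ℝ) : ℝ := ∑ i, x i * y i

/-- The Euclidean norm on ℝⁿ. -/
noncomputable def nrm {n : ℕ} (x : Fin n → ℝ) : ℝ := Real.sqrt (dot x x)

lemma dot_self_nonneg {n : ℕ} (x : Fin n → ℝ) : 0 ≤ dot x x :=
  Finset.sum_nonneg fun i _ => mul_self_nonneg _

lemma nrm_nonneg {n : ℕ} (x : Fin n → ℝ) : 0 ≤ nrm x := Real.sqrt_nonneg _

lemma nrm_sq {n : ℕ} (x : Fin n → ℝ) : nrm x ^ 2 = dot x x :=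
  Real.sq_sqrt (dot_self_nonneg x)

lemma dot_self_eq_zero {n : ℕ} {x : Fin n → ℝ} (h : dot x x = 0) : x = 0 := by
  funext i
  have := (Finset.sum_eq_zero_iff_of_nonneg
    (fun i _ => mul_self_nonneg (x i))).mp h i (Finset.mem_univ i)
  have := mul_self_eq_zero.mp this
  simpa using this

lemma nrm_pos {n : ℕ} {x : Fin n → ℝ} (h : x ≠ 0) : 0 < nrm x := by
  have hx : 0 < dot x x := by
    rcases lt_or_eq_of_le (dot_self_nonneg x) with h' | h'
    · exact h'
    · exact absurd (dot_self_eq_zero h'.symm) h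
  exact Real.sqrt_pos.mpr hx

lemma dot_smul_right {n : ℕ} (d x : Fin n → ℝ) (t : ℝ) :
    dot d (t • x) = t * dot d x := by
  simp [dot, Finset.mul_sum]
  congr 1; funext i; ring

lemma nrm_smul {n : ℕ} (x : Fin n → ℝ) {t : ℝ} (ht : 0 ≤ t) :
    nrm (t • x) = t * nrm x := by
  have : dot (t • x) (t • x) = t ^ 2 * dot x x := by
    simp [dot, Finset.mul_sum]
    congr 1; funext i; ring
  rw [nrm, this, Real.sqrt_mul (by positivity), Real.sqrt_sq ht, nrm]

lemma dot_expand {n : ℕ} (d x : Fin n → ℝ) (c : ℝ) :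
    dot (c • x - d) (c • x - d) = c ^ 2 * dot x x - 2 * c * dot d x + dot d d := by
  have h : ∀ i, (c * x i - d i) * (c * x i - d i)
      = c ^ 2 * (x i * x i) - 2 * c * (d i * x i) + d i * d i := fun i => by ring
  simp only [dot, Pi.sub_apply, Pi.smul_apply, smul_eq_mul, h,
    Finset.sum_add_distrib, Finset.sum_sub_distrib, Finset.mul_sum]

/-- The open angular cone `U(ρ,ε)` around the ray spanned by `d` equals the set
of positive scalar multiples of points of the open ball `B(d, δ)` with
`δ = ‖d‖√(1-ε²)`. -/
theorem stmt6 {n : ℕ} (d : Fin n → ℝ) (hd : d ≠ 0)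
    (ε : ℝ) (hε0 : 0 < ε) (hε1 : ε < 1) :
    {p : Fin n → ℝ | p ≠ 0 ∧ ε < dot d p / (nrm d * nrm p)} =
      {x : Fin n → ℝ | ∃ (t : ℝ) (p : Fin n → ℝ),
        0 < t ∧ nrm (p - d) < nrm d * Real.sqrt (1 - ε ^ 2) ∧ x = t • p} := by
  have hdd : 0 < dot d d := by
    have := nrm_pos hd
    nlinarith [nrm_sq d]
  have hnd : 0 < nrm d := nrm_pos hd
  have hε2 : (0:ℝ) < 1 - ε ^ 2 := by nlinarith
  ext x
  simp only [Set.mem_setOf_eq]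
  constructor
  · rintro ⟨hx, hcos⟩
    have hnx : 0 < nrm x := nrm_pos hx
    have hxx : 0 < dot x x := by nlinarith [nrm_sq x]
    have hdx : ε * (nrm d * nrm x) < dot d x := by
      rw [lt_div_iff₀ (by positivity)] at hcos
      linarith
    have hdxpos : 0 < dot d x := lt_trans (by positivity) hdx
    -- key squared inequality
    have key : ε ^ 2 * (dot d d * dot x x) < dot d x ^ 2 := by
      have h1 : (ε * (nrm d * nrm x)) ^ 2 < dot d x ^ 2 :=
        pow_lt_pow_left₀ hdx (by positivity) two_ne_zero
      have h2 : (ε * (nrm d * nrm x)) ^ 2 = ε ^ 2 * (dot d d * dot x x) := by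
        rw [show (ε * (nrm d * nrm x)) ^ 2 = ε ^ 2 * (nrm d ^ 2 * nrm x ^ 2) by ring,
          nrm_sq, nrm_sq]
      linarith
    set c : ℝ := dot d x / dot x x with hc
    have hcpos : 0 < c := div_pos hdxpos hxx
    refine ⟨c⁻¹, c • x, inv_pos.mpr hcpos, ?_, ?_⟩
    · have hexp : dot (c • x - d) (c • x - d) = dot d d - dot d x ^ 2 / dot x x := by
        rw [dot_expand, hc]
        field_simp
        ring
      have hlt : dot (c • x - d) (c • x - d) < dot d d * (1 - ε ^ 2) := by
        rw [hexp]
        rw [sub_lt_iff_lt_add]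
        have : ε ^ 2 * dot d d < dot d x ^ 2 / dot x x := by
          rw [lt_div_iff₀ hxx]; nlinarith
        nlinarith
      have : nrm (c • x - d) < Real.sqrt (dot d d * (1 - ε ^ 2)) :=
        Real.sqrt_lt_sqrt (dot_self_nonneg _) hlt
      rwa [Real.sqrt_mul hdd.le, ← nrm] at this
    · rw [smul_smul, inv_mul_cancel₀ (ne_of_gt hcpos), one_smul]
  · rintro ⟨t, p, ht, hp, rfl⟩
    have hsq : dot (p - d) (p - d) < dot d d * (1 - ε ^ 2) := by
      have h1 : nrm (p - d) ^ 2 < (nrm d * Real.sqrt (1 - ε ^ 2)) ^ 2 :=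
        pow_lt_pow_left₀ hp (nrm_nonneg _) two_ne_zero
      rw [nrm_sq] at h1
      have h2 : (nrm d * Real.sqrt (1 - ε ^ 2)) ^ 2 = dot d d * (1 - ε ^ 2) := by
        rw [mul_pow, nrm_sq, Real.sq_sqrt hε2.le]
      linarith [h1, h2.le]
    have hexp : dot (p - d) (p - d) = dot p p - 2 * dot d p + dot d d := by
      have := dot_expand d p 1
      simpa using this
    have hkey : dot p p + ε ^ 2 * dot d d < 2 * dot d p := by
      rw [hexp] at hsq; nlinarith
    have hpne : p ≠ 0 := by
      rintro rfl
      have h1 : dot (0 : Fin n → ℝ) 0 = 0 := by simp [dot]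
      have h2 : dot d (0 : Fin n → ℝ) = 0 := by simp [dot]
      rw [h1, h2] at hkey
      nlinarith
    have hnp : 0 < nrm p := nrm_pos hpne
    have hdp : ε * (nrm d * nrm p) < dot d p := by
      nlinarith [nrm_sq d, nrm_sq p, sq_nonneg (nrm p - ε * nrm d)]
    constructor
    · intro h
      apply hpne
      have := smul_eq_zero.mp h
      rcases this with h' | h'
      · exact absurd h' (ne_of_gt ht)
      · exact h'
    · rw [dot_smul_right, nrm_smul p ht.le]
      rw [lt_div_iff₀ (by positivity)]
      calc ε * (nrm d * (t * nrm p)) = t * (ε * (nrm d * nrm p)) := by ring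
        _ < t * dot d p := by exact (mul_lt_mul_iff_right₀ ht).mpr hdp
end

section
/- Let Z ⊆ ℝⁿ be a nonempty closed subset with ℝ≥0·Z = Z. Then Z is exactly the set of points p ∈ ℝⁿ at which all pairs of Boolean tropical Laurent polynomial functions agreeing on Z also agree; that is, V(E(Z)_𝔹) = Z, where E(Z)_𝔹 = { (f,g) : f|_Z = g|_Z } and V(E) = { p : f(p) = g(p) for all (f,g) ∈ E }. -/
private noncomputable def np {n : ℕ} (x : Fin n → ℝ) : ℝ := Real.sqrt (∑ i, x i ^ 2)

private lemma np_nonneg {n : ℕ} (x : Fin n → ℝ) : 0 ≤ np x := Real.sqrt_nonneg _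

private lemma sq_np {n : ℕ} (x : Fin n → ℝ) : np x ^ 2 = ∑ i, x i ^ 2 :=
  Real.sq_sqrt (by positivity)

private lemma cs_le {n : ℕ} (x y : Fin n → ℝ) : ∑ i, x i * y i ≤ np x * np y :=
  Real.sum_mul_le_sqrt_mul_sqrt _ _ _

private lemma cs_abs {n : ℕ} (x y : Fin n → ℝ) : |∑ i, x i * y i| ≤ np x * np y := by
  rw [abs_le]
  refine ⟨?_, cs_le x y⟩
  have h := cs_le (fun i => -x i) y
  have hnp : np (fun i => -x i) = np x := by unfold np; congr 1; apply Finset.sum_congr rfl; intros; ring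
  rw [hnp] at h
  simp only [neg_mul] at h
  rw [Finset.sum_neg_distrib] at h
  linarith

private lemma np_coord {n : ℕ} (x : Fin n → ℝ) (i : Fin n) : |x i| ≤ np x := by
  rw [← Real.sqrt_sq_eq_abs]
  exact Real.sqrt_le_sqrt (Finset.single_le_sum (f := fun j => x j ^ 2) (fun j _ => sq_nonneg _) (Finset.mem_univ i))

private lemma np_round {n : ℕ} (x : Fin n → ℝ) :
    np (fun i => ((round (x i) : ℤ) : ℝ) - x i) ≤ Real.sqrt n := by
  unfold np
  apply Real.sqrt_le_sqrt
  calc ∑ i, (((round (x i) : ℤ) : ℝ) - x i) ^ 2 ≤ ∑ _i : Fin n, (1 : ℝ) := by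
        apply Finset.sum_le_sum
        intro i _
        have h : |x i - (round (x i) : ℝ)| ≤ 1/2 := abs_sub_round (x i)
        have h2 : |((round (x i) : ℤ) : ℝ) - x i| ≤ 1/2 := by rw [abs_sub_comm]; exact_mod_cast h
        have := abs_nonneg (((round (x i) : ℤ) : ℝ) - x i)
        nlinarith [sq_abs (((round (x i) : ℤ) : ℝ) - x i)]
    _ = n := by simp


private lemma exists_ball_finset (n : ℕ) (K : ℤ) (hK : 0 ≤ K) :
    ∃ s : Finset (Fin n → ℤ), ∀ u : Fin n → ℤ, u ∈ s ↔ ∑ i, (u i) ^ 2 ≤ K := by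
  classical
  refine ⟨(Fintype.piFinset fun _ => Finset.Icc (-K) K).filter (fun u => ∑ i, (u i) ^ 2 ≤ K), ?_⟩
  intro u
  rw [Finset.mem_filter]
  constructor
  · exact fun h => h.2
  · intro h
    refine ⟨?_, h⟩
    rw [Fintype.mem_piFinset]
    intro i
    rw [Finset.mem_Icc, ← abs_le]
    by_contra hgt
    push_neg at hgt
    have h1 : K + 1 ≤ |u i| := Int.add_one_le_iff.mpr hgt
    have h2 : (K + 1) ^ 2 ≤ |u i| ^ 2 := pow_le_pow_left₀ (by positivity) h1 2
    rw [sq_abs] at h2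
    have h3 : (u i) ^ 2 ≤ ∑ j, (u j) ^ 2 :=
      Finset.single_le_sum (f := fun j => (u j) ^ 2) (fun j _ => sq_nonneg _) (Finset.mem_univ i)
    nlinarith

/-- A Boolean tropical Laurent polynomial function on ℝⁿ. -/
def IsTropFn (n : ℕ) (f : (Fin n → ℝ) → ℝ) : Prop :=
  ∃ (s : Finset (Fin n → ℤ)) (hs : s.Nonempty),
    ∀ x : Fin n → ℝ, f x = s.sup' hs fun u => ∑ i, (u i : ℝ) * x i

set_option maxHeartbeats 2000000 in
/-- `V(E(Z)_𝔹) = Z` for any nonempty closed cone `Z ⊆ ℝⁿ`: the points at which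
every pair of Boolean tropical Laurent polynomial functions agreeing on `Z`
also agree are exactly the points of `Z`. -/
theorem stmt10 {n : ℕ} (Z : Set (Fin n → ℝ)) (hne : Z.Nonempty) (hcl : IsClosed Z)
    (hcone : {x : Fin n → ℝ | ∃ (t : ℝ) (p : Fin n → ℝ), 0 ≤ t ∧ p ∈ Z ∧ x = t • p} = Z) :
    {p : Fin n → ℝ | ∀ f g : (Fin n → ℝ) → ℝ, IsTropFn n f → IsTropFn n g →
      (∀ x ∈ Z, f x = g x) → f p = g p} = Z := by
  have h0Z : (0 : Fin n → ℝ) ∈ Z := by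
    obtain ⟨q, hq⟩ := hne
    rw [← hcone]; exact ⟨0, q, le_refl 0, hq, (zero_smul ℝ q).symm⟩
  have hsmul : ∀ (t : ℝ) (z : Fin n → ℝ), 0 ≤ t → z ∈ Z → t • z ∈ Z := by
    intro t z ht hz; rw [← hcone]; exact ⟨t, z, ht, hz, rfl⟩
  ext p
  simp only [Set.mem_setOf_eq]
  constructor
  swap
  · intro hp f g _ _ hfg; exact hfg p hp
  intro hp
  by_contra hpZ
  -- distance bound
  obtain ⟨ε₀, hε₀, hball⟩ : ∃ ε > 0, Metric.ball p ε ⊆ Zᶜ :=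
    Metric.isOpen_iff.mp hcl.isOpen_compl p hpZ
  have hdist : ∀ z ∈ Z, ε₀ ≤ np (p - z) := by
    intro z hz
    by_contra hlt
    push_neg at hlt
    have hle : dist p z ≤ np (p - z) := by
      rw [dist_pi_le_iff (np_nonneg _)]
      intro i
      rw [Real.dist_eq]
      have := np_coord (p - z) i
      simpa using this
    have : z ∈ Metric.ball p ε₀ := by
      rw [Metric.mem_ball, dist_comm]
      linarith
    exact hball this hz
  set b := np p with hbdef
  have hb : 0 < b := by
    have h := hdist 0 h0Z
    simpa using lt_of_lt_of_le hε₀ (by simpa using h)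
  clear_value b
  set ε := min ε₀ b with hεdef
  have hε : 0 < ε := lt_min hε₀ hb
  have hεb : ε ≤ b := min_le_right _ _
  have hεε₀ : ε ≤ ε₀ := min_le_left _ _
  clear_value ε
  set c := Real.sqrt (b ^ 2 - ε ^ 2) with hcdef
  have hc0 : 0 ≤ c := Real.sqrt_nonneg _
  have hcsq : c ^ 2 = b ^ 2 - ε ^ 2 := Real.sq_sqrt (by nlinarith)
  have hcb : c < b := by nlinarith
  clear_value c
  -- Claim A
  have hA : ∀ z ∈ Z, ∑ i, p i * z i ≤ c * np z := by
    intro z hz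
    rcases le_or_gt (∑ i, p i * z i) 0 with h | h
    · exact h.trans (mul_nonneg hc0 (np_nonneg z))
    · set S := ∑ i, p i * z i with hSdef
      set Q := ∑ i, z i ^ 2 with hQdef
      have hQ0 : 0 < Q := by
        rcases (Finset.sum_nonneg (fun i _ => sq_nonneg (z i))).lt_or_eq with h' | h'
        · exact h'
        · exfalso
          have hz0 : ∀ i, z i = 0 := by
            intro i
            have := (Finset.sum_eq_zero_iff_of_nonneg (fun i _ => sq_nonneg (z i))).mp h'.symm i (Finset.mem_univ i)
            exact pow_eq_zero_iff (by norm_num) |>.mp this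
          have : S = 0 := Finset.sum_eq_zero (fun i _ => by rw [hz0 i]; ring)
          linarith
      set t := S / Q with htdef
      have ht : 0 < t := div_pos h hQ0
      have htQ : t * Q = S := div_mul_cancel₀ S hQ0.ne'
      clear_value t
      have h1 : ε ≤ np (p - t • z) := le_trans hεε₀ (hdist _ (hsmul t z ht.le hz))
      have h2 : np (p - t • z) ^ 2 = ∑ i, (p i - t * z i) ^ 2 := by
        rw [sq_np]; apply Finset.sum_congr rfl; intro i _; simp
      have hexp : ∑ i, (p i - t * z i) ^ 2 = (∑ i, p i ^ 2) - 2 * t * S + t ^ 2 * Q := by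
        rw [Finset.sum_congr rfl (fun i _ => show (p i - t * z i) ^ 2 =
          p i ^ 2 - 2 * t * (p i * z i) + t ^ 2 * z i ^ 2 by ring)]
        rw [Finset.sum_add_distrib, Finset.sum_sub_distrib, ← Finset.mul_sum, ← Finset.mul_sum]
      have hbb : (∑ i, p i ^ 2) = b ^ 2 := by rw [hbdef]; exact (sq_np p).symm
      have hε2 : ε ^ 2 ≤ np (p - t • z) ^ 2 := pow_le_pow_left₀ hε.le h1 2
      rw [h2, hexp, hbb] at hε2
      -- ε² ≤ b² - 2tS + t²Q = b² - tS  (since tQ = S)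
      have hts : t * S ≤ b ^ 2 - ε ^ 2 := by nlinarith
      have hS2 : S ^ 2 ≤ c ^ 2 * Q := by
        have : S ^ 2 = t * S * Q := by rw [← htQ]; ring
        rw [this, hcsq]
        nlinarith
      have hnpz : np z ^ 2 = Q := sq_np z
      nlinarith [np_nonneg z, mul_nonneg hc0 (np_nonneg z)]
  -- constants
  set rn := Real.sqrt n with hrndef
  have hrn : 0 ≤ rn := Real.sqrt_nonneg _
  clear_value rn
  obtain ⟨M, hM⟩ := exists_nat_gt ((4 * rn + 1) / (b - c))
  have hM' : 4 * rn + 1 < M * (b - c) := by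
    rw [div_lt_iff₀ (by linarith)] at hM
    linarith
  set v : Fin n → ℤ := fun i => round ((M : ℝ) * p i) with hvdef
  have hd_v : np (fun i => ((v i : ℤ) : ℝ) - (M : ℝ) * p i) ≤ rn := by
    simp only [hrndef, hvdef]; exact np_round _
  clear_value v
  have hsplit : ∀ y : Fin n → ℝ, ∑ i, (v i : ℝ) * y i
      = (M : ℝ) * (∑ i, p i * y i) + ∑ i, ((v i : ℝ) - (M : ℝ) * p i) * y i := by
    intro y
    rw [Finset.mul_sum, ← Finset.sum_add_distrib]
    apply Finset.sum_congr rfl; intro i _; ring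
  have hvp : (M : ℝ) * b ^ 2 - rn * b ≤ ∑ i, (v i : ℝ) * p i := by
    rw [hsplit p, hbdef]
    have h1 : |∑ i, ((v i : ℝ) - (M : ℝ) * p i) * p i| ≤ rn * np p :=
      le_trans (cs_abs _ _) (mul_le_mul_of_nonneg_right hd_v (np_nonneg _))
    have h2 : (∑ i, p i * p i) = np p ^ 2 := by
      rw [sq_np]; apply Finset.sum_congr rfl; intro i _; ring
    rw [h2]
    have := neg_abs_le (∑ i, ((v i : ℝ) - (M : ℝ) * p i) * p i)
    linarith
  have hvz : ∀ z ∈ Z, ∑ i, (v i : ℝ) * z i ≤ ((M : ℝ) * c + rn) * np z := by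
    intro z hz
    rw [hsplit z]
    have h1 : |∑ i, ((v i : ℝ) - (M : ℝ) * p i) * z i| ≤ rn * np z :=
      le_trans (cs_abs _ _) (mul_le_mul_of_nonneg_right hd_v (np_nonneg _))
    have h2 := hA z hz
    have habs := abs_le.mp h1
    have h3 : (M : ℝ) * (∑ i, p i * z i) ≤ (M : ℝ) * (c * np z) :=
      mul_le_mul_of_nonneg_left h2 (Nat.cast_nonneg M)
    nlinarith
  set R := (M : ℝ) * c + 2 * rn with hRdef
  have hR : 0 ≤ R := by positivity
  clear_value R
  set K : ℤ := ⌈(R + rn) ^ 2⌉ with hKdef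
  have hK0 : 0 ≤ K := Int.ceil_nonneg (by positivity)
  have hKle : ((R + rn) ^ 2 : ℝ) ≤ K := Int.le_ceil _
  have hKlt : (K : ℝ) < (R + rn) ^ 2 + 1 := Int.ceil_lt_add_one _
  clear_value K
  obtain ⟨s, hmem⟩ := exists_ball_finset n K hK0
  have hs_ne : s.Nonempty := ⟨0, (hmem 0).mpr (by simp [hK0])⟩
  have hnp_u : ∀ u ∈ s, np (fun i => ((u i : ℤ) : ℝ)) ≤ R + rn + 1 := by
    intro u hu
    have h1 : ((∑ i, (u i) ^ 2 : ℤ) : ℝ) ≤ K := by exact_mod_cast (hmem u).mp hu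
    have h2 : (∑ i, ((u i : ℤ) : ℝ) ^ 2) ≤ (R + rn + 1) ^ 2 := by
      push_cast at h1
      nlinarith
    calc np (fun i => ((u i : ℤ) : ℝ)) ≤ Real.sqrt ((R + rn + 1) ^ 2) := Real.sqrt_le_sqrt h2
      _ = R + rn + 1 := Real.sqrt_sq (by positivity)
  -- the two tropical functions
  set F : (Fin n → ℝ) → ℝ := fun x => s.sup' hs_ne fun u => ∑ i, (u i : ℝ) * x i with hFdef
  have hs_ne' : (insert v s).Nonempty := Finset.insert_nonempty v s
  set G : (Fin n → ℝ) → ℝ := fun x => (insert v s).sup' hs_ne' fun u => ∑ i, (u i : ℝ) * x i with hGdef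
  have hFt : IsTropFn n F := ⟨s, hs_ne, fun x => rfl⟩
  have hGt : IsTropFn n G := ⟨insert v s, hs_ne', fun x => rfl⟩
  clear_value F G
  -- key1 : on Z, the v-piece is dominated
  have key1 : ∀ z ∈ Z, ∑ i, (v i : ℝ) * z i ≤ F z := by
    intro z hz
    by_cases hz0 : ∀ i, z i = 0
    · have h1 : ∑ i, (v i : ℝ) * z i = 0 := Finset.sum_eq_zero (fun i _ => by rw [hz0 i]; ring)
      have h2 : (0 : ℝ) ≤ F z := by
        simp only [hFdef]
        have := Finset.le_sup' (fun u : Fin n → ℤ => ∑ i, (u i : ℝ) * z i) ((hmem 0).mpr (by simp [hK0]))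
        simp at this; exact this
      linarith
    · push_neg at hz0
      obtain ⟨i₀, hi₀⟩ := hz0
      set Q := ∑ i, z i ^ 2 with hQdef
      have hQ0 : 0 < Q := by
        apply Finset.sum_pos' (fun i _ => sq_nonneg _)
        exact ⟨i₀, Finset.mem_univ i₀, by positivity⟩
      set nz := np z with hnzdef
      have hnz : 0 < nz := Real.sqrt_pos.mpr hQ0
      have hnzsq : nz ^ 2 = Q := sq_np z
      set w : Fin n → ℝ := fun i => R / nz * z i with hwdef
      set u : Fin n → ℤ := fun i => round (w i) with hudef
      have hdw : np (fun i => ((u i : ℤ) : ℝ) - w i) ≤ rn := by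
        simp only [hrndef, hudef]; exact np_round w
      clear_value u
      have hww : ∑ i, w i ^ 2 = R ^ 2 := by
        rw [Finset.sum_congr rfl (fun i _ => show w i ^ 2 = (R / nz) ^ 2 * z i ^ 2 by rw [hwdef]; ring),
          ← Finset.mul_sum, ← hQdef, ← hnzsq]
        field_simp
      have hnpw : np w = R := by
        unfold np
        rw [hww]
        exact Real.sqrt_sq hR
      -- ∑ u i ^2 ≤ (R+rn)^2
      have hucast : ∑ i, ((u i : ℤ) : ℝ) ^ 2 ≤ (R + rn) ^ 2 := by
        have hexpand : ∑ i, ((u i : ℤ) : ℝ) ^ 2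
            = ∑ i, w i ^ 2 + 2 * ∑ i, w i * (((u i : ℤ) : ℝ) - w i) + ∑ i, (((u i : ℤ) : ℝ) - w i) ^ 2 := by
          rw [Finset.mul_sum, ← Finset.sum_add_distrib, ← Finset.sum_add_distrib]
          apply Finset.sum_congr rfl; intro i _; ring
        have hmid : |∑ i, w i * (((u i : ℤ) : ℝ) - w i)| ≤ R * rn := by
          calc |∑ i, w i * (((u i : ℤ) : ℝ) - w i)| ≤ np w * np (fun i => ((u i : ℤ) : ℝ) - w i) := cs_abs _ _
            _ ≤ R * rn := by rw [hnpw]; exact mul_le_mul_of_nonneg_left hdw hR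
        have hdsq : ∑ i, (((u i : ℤ) : ℝ) - w i) ^ 2 ≤ rn ^ 2 := by
          have h := hdw
          have h2 : np (fun i => ((u i : ℤ) : ℝ) - w i) ^ 2 ≤ rn ^ 2 := pow_le_pow_left₀ (np_nonneg _) h 2
          rw [sq_np] at h2
          exact h2
        have habs := abs_le.mp hmid
        rw [hexpand, hww]
        nlinarith
      have huS : u ∈ s := by
        rw [hmem]
        have : ((∑ i, (u i) ^ 2 : ℤ) : ℝ) ≤ (K : ℝ) := by
          push_cast
          exact le_trans hucast hKle
        exact_mod_cast this
      have huz : (R - rn) * nz ≤ ∑ i, (u i : ℝ) * z i := by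
        have hsplit2 : ∑ i, (u i : ℝ) * z i
            = ∑ i, w i * z i + ∑ i, (((u i : ℤ) : ℝ) - w i) * z i := by
          rw [← Finset.sum_add_distrib]
          apply Finset.sum_congr rfl; intro i _; ring
        have hwz : ∑ i, w i * z i = R * nz := by
          rw [Finset.sum_congr rfl (fun i _ => show w i * z i = R / nz * z i ^ 2 by rw [hwdef]; ring),
            ← Finset.mul_sum, ← hQdef, ← hnzsq]
          field_simp
        have h1 : |∑ i, (((u i : ℤ) : ℝ) - w i) * z i| ≤ rn * nz :=
          le_trans (cs_abs _ _) (mul_le_mul_of_nonneg_right hdw (np_nonneg _))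
        have habs := abs_le.mp h1
        rw [hsplit2, hwz]
        nlinarith
    -- chain
      have hvz' := hvz z hz
      have hchain : ∑ i, (v i : ℝ) * z i ≤ ∑ i, (u i : ℝ) * z i := by
        have heq2 : ((M : ℝ) * c + rn) * nz = (R - rn) * nz := by rw [hRdef]; ring
        rw [← hnzdef] at hvz'
        linarith [hvz', huz]
      refine le_trans hchain ?_
      simp only [hFdef]
      exact Finset.le_sup' (fun u : Fin n → ℤ => ∑ i, (u i : ℝ) * z i) huS
  -- key2 : at p, the v-piece strictly dominates F
  have key2 : F p < ∑ i, (v i : ℝ) * p i := by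
    have h1 : F p ≤ (R + rn + 1) * b := by
      simp only [hFdef]
      rw [hbdef]
      apply Finset.sup'_le
      intro u hu
      calc ∑ i, (u i : ℝ) * p i ≤ np (fun i => ((u i : ℤ) : ℝ)) * np p := cs_le _ _
        _ ≤ (R + rn + 1) * np p := mul_le_mul_of_nonneg_right (hnp_u u hu) (np_nonneg _)
    have h2 : (R + rn + 1) * b < (M : ℝ) * b ^ 2 - rn * b := by
      rw [hRdef]
      nlinarith
    linarith [hvp]
  -- conclusion
  have hagree : ∀ x ∈ Z, F x = G x := by
    intro z hz
    simp only [hGdef, hFdef]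
    rw [Finset.sup'_insert]
    have h := key1 z hz
    simp only [hFdef] at h
    exact (sup_eq_right.mpr h).symm
  have heq : F p = G p := hp F G hFt hGt hagree
  have hGp : ∑ i, (v i : ℝ) * p i ≤ G p := by
    simp only [hGdef]
    exact Finset.le_sup' (fun u : Fin n → ℤ => ∑ i, (u i : ℝ) * p i) (Finset.mem_insert_self v s)
  linarith
end

section
/- Let X be a 1-dimensional rational fan in ℝⁿ, i.e., |X| is a finite union of rays each spanned by an integer vector (possibly together with the origin). Then V(E(|X|)_𝔹) = |X|: a point p belongs to |X| if and only if every pair of Boolean tropical Laurent polynomial functions agreeing on |X| also agree at p. -/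
lemma sum_sq_pos' {n : ℕ} {v : Fin n → ℝ} (hv : v ≠ 0) : 0 < ∑ i, v i * v i := by
  obtain ⟨i, hi⟩ : ∃ i, v i ≠ 0 := by
    by_contra h; push_neg at h; exact hv (funext h)
  exact Finset.sum_pos' (fun j _ => mul_self_nonneg _)
    ⟨i, Finset.mem_univ i, mul_self_pos.mpr hi⟩

lemma approxLemma {n : ℕ} (w p q : Fin n → ℝ) (hp : 0 < ∑ i, w i * p i)
    (hq : ∑ i, w i * q i < 0) :
    ∃ v : Fin n → ℤ, 0 < ∑ i, (v i : ℝ) * p i ∧ ∑ i, (v i : ℝ) * q i ≤ 0 := by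
  obtain ⟨N, hN⟩ := exists_nat_gt (max ((1 + ∑ i, |p i|) / (∑ i, w i * p i))
    ((1 + ∑ i, |q i|) / (-(∑ i, w i * q i))))
  have hN1 := lt_of_le_of_lt (le_max_left _ _) hN
  have hN2 := lt_of_le_of_lt (le_max_right _ _) hN
  rw [div_lt_iff₀ hp] at hN1
  rw [div_lt_iff₀ (by linarith)] at hN2
  set v : Fin n → ℤ := fun i => ⌊(N : ℝ) * w i⌋ with hv
  have key : ∀ x : Fin n → ℝ,
      |∑ i, ((v i : ℝ) - (N : ℝ) * w i) * x i| ≤ ∑ i, |x i| := by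
    intro x
    calc |∑ i, ((v i : ℝ) - (N : ℝ) * w i) * x i|
        ≤ ∑ i, |((v i : ℝ) - (N : ℝ) * w i) * x i| := Finset.abs_sum_le_sum_abs _ _
      _ ≤ ∑ i, |x i| := by
          apply Finset.sum_le_sum
          intro i _
          rw [abs_mul]
          have h1 : |((v i : ℝ) - (N : ℝ) * w i)| ≤ 1 := by
            rw [abs_le]
            constructor
            · have := Int.sub_one_lt_floor ((N : ℝ) * w i)
              simp only [hv]; linarith
            · have := Int.floor_le ((N : ℝ) * w i)
              simp only [hv]; linarith
          calc |((v i : ℝ) - (N : ℝ) * w i)| * |x i| ≤ 1 * |x i| :=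
                mul_le_mul_of_nonneg_right h1 (abs_nonneg _)
            _ = |x i| := one_mul _
  have hsplit : ∀ x : Fin n → ℝ, ∑ i, (v i : ℝ) * x i =
      (∑ i, ((v i : ℝ) - (N : ℝ) * w i) * x i) + (N : ℝ) * ∑ i, w i * x i := by
    intro x
    rw [Finset.mul_sum, ← Finset.sum_add_distrib]
    exact Finset.sum_congr rfl fun i _ => by ring
  refine ⟨v, ?_, ?_⟩
  · have hk := key p
    rw [abs_le] at hk
    rw [hsplit p]
    linarith [hk.1]
  · have hk := key q
    rw [abs_le] at hk
    rw [hsplit q]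
    nlinarith [hk.2]

lemma sepLemma {n : ℕ} (d : Fin n → ℤ) (hd : d ≠ 0) (p : Fin n → ℝ)
    (hp : p ≠ 0) (h : ∀ t : ℝ, 0 ≤ t → p ≠ t • fun i => (d i : ℝ)) :
    ∃ v : Fin n → ℤ, (∑ i, (v i : ℝ) * (d i : ℝ)) ≤ 0 ∧ 0 < ∑ i, (v i : ℝ) * p i := by
  set dr : Fin n → ℝ := fun i => (d i : ℝ) with hdr
  have hdr0 : dr ≠ 0 := by
    intro h0
    apply hd
    funext i
    have := congrFun h0 i
    simpa [hdr] using this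
  set A := ∑ i, dr i * dr i with hA
  have hA0 : 0 < A := sum_sq_pos' hdr0
  set B := ∑ i, p i * dr i with hB
  set w : Fin n → ℝ := fun i => A * p i - B * dr i with hw
  have hwd : ∑ i, w i * dr i = 0 := by
    have h1 : ∀ i ∈ Finset.univ, w i * dr i = A * (p i * dr i) - B * (dr i * dr i) :=
      fun i _ => by simp only [hw]; ring
    rw [Finset.sum_congr rfl h1, Finset.sum_sub_distrib, ← Finset.mul_sum,
      ← Finset.mul_sum, ← hB, ← hA]
    ring
  by_cases hw0 : w = 0
  · -- parallel case: p = (B/A) • dr with B/A < 0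
    have hpB : p = (B / A) • dr := by
      funext i
      have h2 := congrFun hw0 i
      simp only [hw, Pi.zero_apply] at h2
      have : A * p i = B * dr i := by linarith
      rw [Pi.smul_apply, smul_eq_mul]
      field_simp
      linarith
    have hBA : B / A < 0 := by
      rcases lt_or_ge (B / A) 0 with h' | h'
      · exact h'
      · exact absurd hpB (h _ h')
    have hBneg : B < 0 := by
      rcases lt_or_ge B 0 with h' | h'
      · exact h'
      · exact absurd (div_nonneg h' hA0.le) (not_le.mpr hBA)
    refine ⟨-d, ?_, ?_⟩
    · have : ∑ i, ((-d) i : ℝ) * (d i : ℝ) = -A := by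
        rw [hA, ← Finset.sum_neg_distrib]
        exact Finset.sum_congr rfl fun i _ => by
          simp only [Pi.neg_apply, Int.cast_neg, hdr]; ring
      rw [this]; linarith
    · have : ∑ i, ((-d) i : ℝ) * p i = -B := by
        rw [hB, ← Finset.sum_neg_distrib]
        exact Finset.sum_congr rfl fun i _ => by
          simp only [Pi.neg_apply, Int.cast_neg, hdr]; ring
      rw [this]; linarith
  · -- nonparallel case
    have hwp : ∑ i, w i * p i = (∑ i, w i * w i) / A := by
      have h1 : ∀ i ∈ Finset.univ, w i * w i = A * (w i * p i) - B * (w i * dr i) :=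
        fun i _ => by simp only [hw]; ring
      have h2 : ∑ i, w i * w i = A * (∑ i, w i * p i) - B * (∑ i, w i * dr i) := by
        rw [Finset.sum_congr rfl h1, Finset.sum_sub_distrib, ← Finset.mul_sum,
          ← Finset.mul_sum]
      rw [h2, hwd]
      field_simp
      ring
    have hC : 0 < ∑ i, w i * p i := by
      rw [hwp]
      exact div_pos (sum_sq_pos' hw0) hA0
    set C := ∑ i, w i * p i with hCdef
    set ε := C / (2 * (|B| + 1)) with hε
    have hεpos : 0 < ε := div_pos hC (by positivity)
    set w' : Fin n → ℝ := fun i => w i - ε * dr i with hw'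
    have hdp : ∑ i, dr i * p i = B := by
      rw [hB]; exact Finset.sum_congr rfl fun i _ => by ring
    have h1 : ∑ i, w' i * p i = C - ε * B := by
      have : ∀ i ∈ Finset.univ, w' i * p i = w i * p i - ε * (dr i * p i) :=
        fun i _ => by simp only [hw']; ring
      rw [Finset.sum_congr rfl this, Finset.sum_sub_distrib, ← Finset.mul_sum, hdp]
    have h2 : ∑ i, w' i * dr i = -(ε * A) := by
      have : ∀ i ∈ Finset.univ, w' i * dr i = w i * dr i - ε * (dr i * dr i) :=
        fun i _ => by simp only [hw']; ring
      rw [Finset.sum_congr rfl this, Finset.sum_sub_distrib, ← Finset.mul_sum,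
        hwd, ← hA]
      ring
    have hεB : ε * B < C := by
      have hB1 : B ≤ |B| := le_abs_self B
      have h3 : ε * (|B| + 1) = C / 2 := by
        rw [hε]; field_simp
      nlinarith [abs_nonneg B]
    obtain ⟨v, hv1, hv2⟩ := approxLemma w' p dr (by rw [h1]; linarith)
      (by rw [h2]; nlinarith)
    exact ⟨v, hv2, hv1⟩

/-- `V(E(|X|)_𝔹) = |X|` for a 1-dimensional rational fan `X` in ℝⁿ, whose
support is the union of the origin and the rays spanned by the integer vectors
in the finite set `D`. -/
theorem stmt11 {n : ℕ} (D : Finset (Fin n → ℤ)) (hD : ∀ d ∈ D, d ≠ 0) :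
    {p : Fin n → ℝ | ∀ f g : (Fin n → ℝ) → ℝ, IsTropFn n f → IsTropFn n g →
        (∀ x ∈ {x : Fin n → ℝ | x = 0 ∨
            ∃ d ∈ D, ∃ t : ℝ, 0 ≤ t ∧ x = t • fun i => (d i : ℝ)}, f x = g x) →
        f p = g p} =
      {x : Fin n → ℝ | x = 0 ∨
        ∃ d ∈ D, ∃ t : ℝ, 0 ≤ t ∧ x = t • fun i => (d i : ℝ)} := by
  ext p
  simp only [Set.mem_setOf_eq]
  constructor
  · intro hp
    by_contra hpz
    push_neg at hpz
    obtain ⟨hp0, hray⟩ := hpz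
    -- a vector positive on p
    obtain ⟨v0, hv0, -⟩ := approxLemma p p (fun i => -p i) (sum_sq_pos' hp0)
      (by
        have : ∑ i, p i * (fun i => -p i) i = -(∑ i, p i * p i) := by
          rw [← Finset.sum_neg_distrib]
          exact Finset.sum_congr rfl fun i _ => by ring
        rw [this]
        linarith [sum_sq_pos' hp0])
    -- separating vectors for each direction
    have hsep : ∀ d : Fin n → ℤ, ∃ v : Fin n → ℤ,
        d ∈ D → ((∑ i, (v i : ℝ) * (d i : ℝ)) ≤ 0 ∧ 0 < ∑ i, (v i : ℝ) * p i) := by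
      intro d
      by_cases hdD : d ∈ D
      · obtain ⟨v, h1, h2⟩ := sepLemma d (hD d hdD) p hp0 (fun t ht => hray d hdD t ht)
        exact ⟨v, fun _ => ⟨h1, h2⟩⟩
      · exact ⟨0, fun hmem => absurd hmem hdD⟩
    choose V hV using hsep
    classical
    set T : Finset (Fin n → ℤ) := insert (-v0) (D.image fun d => -(V d)) with hT
    have hTne : T.Nonempty := Finset.insert_nonempty _ _
    set φ : (Fin n → ℤ) → (Fin n → ℝ) → ℝ := fun u x => ∑ i, (u i : ℝ) * x i with hφ
    have hφneg : ∀ (u : Fin n → ℤ) (x : Fin n → ℝ), φ (-u) x = -(φ u x) := by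
      intro u x
      simp only [hφ]
      rw [← Finset.sum_neg_distrib]
      exact Finset.sum_congr rfl fun i _ => by
        simp only [Pi.neg_apply, Int.cast_neg]; ring
    set g : (Fin n → ℝ) → ℝ := fun x => T.sup' hTne fun u => φ u x with hg
    set f : (Fin n → ℝ) → ℝ :=
      fun x => (insert 0 T).sup' (Finset.insert_nonempty 0 T) fun u => φ u x with hf
    have hgT : IsTropFn n g := ⟨T, hTne, fun x => rfl⟩
    have hfT : IsTropFn n f := ⟨insert 0 T, Finset.insert_nonempty 0 T, fun x => rfl⟩
    have hφ0 : ∀ x : Fin n → ℝ, φ 0 x = 0 := by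
      intro x; simp [hφ]
    have hfmax : ∀ x, f x = max 0 (g x) := by
      intro x
      show (insert 0 T).sup' (Finset.insert_nonempty 0 T) (fun u => φ u x) = max 0 (g x)
      rw [Finset.sup'_insert (H := hTne), hφ0]
    have hgp : g p < 0 := by
      rw [hg, Finset.sup'_lt_iff]
      intro u hu
      rw [hT, Finset.mem_insert] at hu
      rcases hu with rfl | hu
      · have := hφneg v0 p
        simp only [hφ] at this hv0 ⊢
        rw [this]; linarith
      · obtain ⟨d, hdD, rfl⟩ := Finset.mem_image.mp hu
        have h2 := (hV d hdD).2
        have := hφneg (V d) p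
        simp only [hφ] at this h2 ⊢
        rw [this]; linarith
    have hagree : ∀ x ∈ {x : Fin n → ℝ | x = 0 ∨
        ∃ d ∈ D, ∃ t : ℝ, 0 ≤ t ∧ x = t • fun i => (d i : ℝ)}, f x = g x := by
      intro x hx
      rw [hfmax]
      rcases hx with rfl | ⟨d, hdD, t, ht, rfl⟩
      · have : g 0 = 0 := by
          show T.sup' hTne (fun u => φ u 0) = 0
          have h0 : ∀ u ∈ T, φ u (0 : Fin n → ℝ) = 0 := fun u _ => by simp [hφ]
          rw [Finset.sup'_congr hTne rfl h0, Finset.sup'_const]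
        rw [this]
        simp
      · apply max_eq_right
        have hmem : -(V d) ∈ T := by
          rw [hT]
          exact Finset.mem_insert_of_mem (Finset.mem_image_of_mem _ hdD)
        refine le_trans ?_ (Finset.le_sup' (fun u => φ u _) hmem)
        rw [hφneg]
        have hcalc : φ (V d) (t • fun i => (d i : ℝ)) =
            t * (∑ i, (V d i : ℝ) * (d i : ℝ)) := by
          simp only [hφ]
          rw [Finset.mul_sum]
          exact Finset.sum_congr rfl fun i _ => by
            simp only [Pi.smul_apply, smul_eq_mul]; ring
        rw [hcalc]
        have := (hV d hdD).1
        nlinarith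
    have hEq := hp f g hfT hgT hagree
    rw [hfmax p, max_eq_left hgp.le] at hEq
    linarith [hgp, hEq.symm.le]
  · intro hx f g hf hg hagree
    exact hagree p hx
end

section
/- Let A be a finite set and F₁,…,F_n ∈ ℤ^A_0. Define φ from the semiring of Boolean tropical Laurent polynomial functions in n variables to ℤ^A_pos ∪ {-∞} by φ(f) = f(F₁,…,F_n). For a ∈ A let d_a = (F₁(a),…,F_n(a)) ∈ ℤⁿ and let X_F be the union of the rays spanned by the d_a (together with the origin). Then the kernel congruence Ker(φ) = { (f,g) : φ(f) = φ(g) } equals { (f,g) : f|_{|X_F|} = g|_{|X_F|} }. -/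
lemma tropfn_smul {n : ℕ} {f : (Fin n → ℝ) → ℝ} (hf : IsTropFn n f)
    {t : ℝ} (ht : 0 ≤ t) (x : Fin n → ℝ) : f (t • x) = t * f x := by
  obtain ⟨s, hs, h⟩ := hf
  rw [h, h, eq_comm]
  refine (Finset.comp_sup'_eq_sup'_comp hs (fun y => t * y)
    (fun a b => mul_max_of_nonneg a b ht)).trans (Finset.sup'_congr hs rfl ?_)
  intro u _
  simp only [Function.comp, Finset.mul_sum, Pi.smul_apply, smul_eq_mul]
  exact Finset.sum_congr rfl fun i _ => by ring

/-- Key Lemma 1: for `F₁, …, F_n ∈ ℤ^A_0`, the kernel of the evaluation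
homomorphism `φ(f) = f(F₁, …, F_n)` (computed pointwise, i.e. `(f,g) ∈ Ker φ`
iff `f(d_a) = g(d_a)` for every `a`, where `d_a = (F₁(a), …, F_n(a))`) equals
the congruence of pairs of functions agreeing on the support of the fan `X_F`
consisting of the rays spanned by the vectors `d_a` together with the origin. -/
theorem stmt12 {A : Type} [Fintype A] {n : ℕ}
    (F : Fin n → A → ℤ) (hF : ∀ i, ∑ a, F i a = 0)
    (f g : (Fin n → ℝ) → ℝ) (hf : IsTropFn n f) (hg : IsTropFn n g) :
    ((∀ a : A, f (fun i => (F i a : ℝ)) = g (fun i => (F i a : ℝ))) ↔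
      ∀ x ∈ {x : Fin n → ℝ | x = 0 ∨
          ∃ (a : A) (t : ℝ), 0 ≤ t ∧ x = t • fun i => (F i a : ℝ)},
        f x = g x) := by
  constructor
  · rintro h x (rfl | ⟨a, t, ht, rfl⟩)
    · have h0 : (0 : Fin n → ℝ) = (0:ℝ) • (0 : Fin n → ℝ) := by simp
      rw [h0, tropfn_smul hf le_rfl, tropfn_smul hg le_rfl]
      simp
    · rw [tropfn_smul hf ht, tropfn_smul hg ht, h a]
  · intro h a
    apply h
    exact Or.inr ⟨a, 1, zero_le_one, by simp⟩
end

section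
/- Let A be a finite set, F₁,…,F_n ∈ ℤ^A_0, R the subsemiring of ℤ^A_pos ∪ {-∞} Laurent-generated by {F₁,…,F_n}, B another finite set, and ν : R → ℤ^B_pos ∪ {-∞} a semiring homomorphism. Then for every b ∈ B, the vector (ν(F₁)(b),…,ν(F_n)(b)) ∈ ℤⁿ lies in V(E(|X_F|)_𝔹), i.e., f(ν(F₁)(b),…,ν(F_n)(b)) = g(ν(F₁)(b),…,ν(F_n)(b)) for every pair (f,g) of Boolean tropical Laurent polynomial functions agreeing on |X_F|. -/
/-- Addition (pointwise max) in the semiring (ℤ ∪ {-∞})^A. -/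
def tAdd {A : Type} (F G : A → WithBot ℤ) : A → WithBot ℤ := fun a => F a ⊔ G a

/-- Multiplication (pointwise truncated sum) in the semiring (ℤ ∪ {-∞})^A. -/
def tMul {A : Type} (F G : A → WithBot ℤ) : A → WithBot ℤ := fun a => F a + G a

/-- The additive identity: the constant -∞ function. -/
def tZero {A : Type} : A → WithBot ℤ := fun _ => ⊥

/-- The multiplicative identity: the constant 0 function. -/
def tOne {A : Type} : A → WithBot ℤ := fun _ => (0 : ℤ)

/-- Inclusion of ℤ-valued functions into (ℤ ∪ {-∞})^A. -/
def ofInt {A : Type} (f : A → ℤ) : A → WithBot ℤ := fun a => (f a : WithBot ℤ)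

/-- The subsemiring ℤ^A_pos ∪ {-∞}: either the constant -∞ or ℤ-valued with
nonnegative total sum. -/
def ZPos (A : Type) [Fintype A] : Set (A → WithBot ℤ) :=
  {F | F = tZero ∨ ∃ f : A → ℤ, F = ofInt f ∧ 0 ≤ ∑ a, f a}

/-- Membership in the subsemiring Laurent-generated by the units F₁, …, F_n
(each `F i : A → ℤ`, with inverse `-(F i)`). -/
inductive LGen {A : Type} {n : ℕ} (F : Fin n → A → ℤ) : (A → WithBot ℤ) → Prop
  | gen (i : Fin n) : LGen F (ofInt (F i))
  | inv (i : Fin n) : LGen F (ofInt (-(F i)))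
  | zero : LGen F tZero
  | one : LGen F tOne
  | add {P Q : A → WithBot ℤ} : LGen F P → LGen F Q → LGen F (tAdd P Q)
  | mul {P Q : A → WithBot ℤ} : LGen F P → LGen F Q → LGen F (tMul P Q)

/-- `ν` behaves as a semiring homomorphism on the subsemiring Laurent-generated
by the `F i`, with values in the subsemiring `ℤ^B_pos ∪ {-∞}`. -/
def IsHomOn {A B : Type} [Fintype B] {n : ℕ} (F : Fin n → A → ℤ)
    (ν : (A → WithBot ℤ) → (B → WithBot ℤ)) : Prop :=
  ν tZero = tZero ∧ ν tOne = tOne ∧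
  (∀ P Q, LGen F P → LGen F Q → ν (tAdd P Q) = tAdd (ν P) (ν Q)) ∧
  (∀ P Q, LGen F P → LGen F Q → ν (tMul P Q) = tMul (ν P) (ν Q)) ∧
  (∀ P, LGen F P → ν P ∈ ZPos B)

lemma tMul_ofInt {A : Type} (f g : A → ℤ) :
    tMul (ofInt f) (ofInt g) = ofInt (fun a => f a + g a) := by
  funext a; simp [tMul, ofInt]

lemma tAdd_ofInt {A : Type} (f g : A → ℤ) :
    tAdd (ofInt f) (ofInt g) = ofInt (fun a => f a ⊔ g a) := by
  funext a; exact (WithBot.coe_sup _ _).symm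

lemma ofInt_zero_eq_tOne {A : Type} : (ofInt (fun _ : A => (0:ℤ))) = tOne := rfl

lemma cast_sup' {α : Type*} (s : Finset α) (hs : s.Nonempty) (w : α → ℤ) :
    ((s.sup' hs w : ℤ) : ℝ) = s.sup' hs fun u => (w u : ℝ) :=
  Finset.comp_sup'_eq_sup'_comp hs _ (fun x y => by simp [Int.cast_max])

/-- For any semiring homomorphism `ν` from the subsemiring Laurent-generated by
`F₁, …, F_n ∈ ℤ^A_0` to ℤ^B_pos ∪ {-∞}, and any `b ∈ B`, the integer vector
`(ν(F₁)(b), …, ν(F_n)(b))` lies in `V(E(|X_F|)_𝔹)`: every pair of Boolean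
tropical Laurent polynomial functions agreeing on the support `|X_F|` (the
union of the origin and the rays spanned by the `d_a = (F₁(a), …, F_n(a))`)
agrees at that vector. -/
theorem stmt13 {A B : Type} [Fintype A] [Fintype B] {n : ℕ}
    (F : Fin n → A → ℤ) (hF : ∀ i, ∑ a, F i a = 0)
    (ν : (A → WithBot ℤ) → (B → WithBot ℤ)) (hν : IsHomOn F ν) :
    ∀ b : B, ∃ G : Fin n → ℤ,
      (∀ i, ν (ofInt (F i)) b = (G i : WithBot ℤ)) ∧
      ∀ f g : (Fin n → ℝ) → ℝ, IsTropFn n f → IsTropFn n g →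
        (∀ x ∈ {x : Fin n → ℝ | x = 0 ∨
            ∃ (a : A) (t : ℝ), 0 ≤ t ∧ x = t • fun i => (F i a : ℝ)}, f x = g x) →
        f (fun i => (G i : ℝ)) = g (fun i => (G i : ℝ)) := by

  obtain ⟨hz, ho, hadd, hmul, hpos⟩ := hν
  intro b
  -- Step 1: units give integer values
  have hunit : ∀ i : Fin n, ∃ g : ℤ, ν (ofInt (F i)) b = (g : WithBot ℤ) ∧
      ν (ofInt (-(F i))) b = ((-g : ℤ) : WithBot ℤ) := by
    intro i
    have h1 : tMul (ofInt (F i)) (ofInt (-(F i))) = tOne := by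
      funext a
      show ((F i a : ℤ) : WithBot ℤ) + ((-F i) a : ℤ) = ((0:ℤ) : WithBot ℤ)
      rw [← WithBot.coe_add]
      simp
    have h2 := hmul _ _ (LGen.gen i) (LGen.inv i)
    rw [h1, ho] at h2
    have h3 : ν (ofInt (F i)) b + ν (ofInt (-(F i))) b = ((0:ℤ) : WithBot ℤ) := by
      have := congrFun h2 b
      simpa [tMul, tOne] using this.symm
    rcases WithBot.add_eq_coe.mp h3 with ⟨m, k, hx, hy, hmk⟩
    refine ⟨m, hx.symm, ?_⟩
    rw [← hy]
    congr 1
    omega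
  choose G hG hG' using hunit
  refine ⟨G, hG, ?_⟩
  -- Step 2: natural powers
  have hnat : ∀ (k : ℕ) (h : A → ℤ) (g : ℤ), LGen F (ofInt h) →
      ν (ofInt h) b = (g : WithBot ℤ) →
      LGen F (ofInt fun a => (k:ℤ) * h a) ∧
        ν (ofInt fun a => (k:ℤ) * h a) b = (((k:ℤ) * g : ℤ) : WithBot ℤ) := by
    intro k
    induction k with
    | zero =>
      intro h g hL hv
      have e : (ofInt fun a => ((0:ℕ):ℤ) * h a) = tOne := by
        rw [← ofInt_zero_eq_tOne]
        exact congrArg ofInt (funext fun a => by simp)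
      rw [e]
      refine ⟨LGen.one, ?_⟩
      rw [ho]
      simp [tOne]
    | succ k ih =>
      intro h g hL hv
      obtain ⟨ihL, ihv⟩ := ih h g hL hv
      have e : (ofInt fun a => ((k+1:ℕ):ℤ) * h a) =
          tMul (ofInt fun a => (k:ℤ) * h a) (ofInt h) := by
        rw [tMul_ofInt]
        exact congrArg ofInt (funext fun a => by push_cast; ring)
      rw [e]
      refine ⟨LGen.mul ihL hL, ?_⟩
      rw [hmul _ _ ihL hL]
      show ν (ofInt fun a => (k:ℤ) * h a) b + ν (ofInt h) b = _
      rw [ihv, hv, ← WithBot.coe_add]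
      congr 1
      push_cast
      ring
  -- Step 3: integer powers of generators
  have hint : ∀ (k : ℤ) (i : Fin n),
      LGen F (ofInt fun a => k * F i a) ∧
        ν (ofInt fun a => k * F i a) b = ((k * G i : ℤ) : WithBot ℤ) := by
    intro k i
    rcases Int.eq_nat_or_neg k with ⟨m, rfl | rfl⟩
    · exact hnat m (F i) (G i) (LGen.gen i) (hG i)
    · have e1 : (fun a => (-(m:ℤ)) * F i a) = (fun a => (m:ℤ) * (-(F i)) a) := by
        funext a
        show (-(m:ℤ)) * F i a = (m:ℤ) * (-(F i a))
        ring
      have e2 : (-(m:ℤ)) * G i = (m:ℤ) * (-(G i)) := by ring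
      rw [e1, e2]
      exact hnat m (-(F i)) (-(G i)) (LGen.inv i) (hG' i)
  -- Step 4: monomials
  have hmon : ∀ (u : Fin n → ℤ),
      LGen F (ofInt fun a => ∑ i, u i * F i a) ∧
        ν (ofInt fun a => ∑ i, u i * F i a) b = ((∑ i, u i * G i : ℤ) : WithBot ℤ) := by
    intro u
    have key : ∀ s : Finset (Fin n),
        LGen F (ofInt fun a => ∑ i ∈ s, u i * F i a) ∧
          ν (ofInt fun a => ∑ i ∈ s, u i * F i a) b
            = ((∑ i ∈ s, u i * G i : ℤ) : WithBot ℤ) := by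
      intro s
      induction s using Finset.induction_on with
      | empty =>
        have e : (ofInt fun a => ∑ i ∈ (∅ : Finset (Fin n)), u i * F i a) = tOne := by
          rw [← ofInt_zero_eq_tOne]
          exact congrArg ofInt (funext fun a => by simp)
        rw [e]
        refine ⟨LGen.one, ?_⟩
        rw [ho]
        simp [tOne]
      | @insert j s' hj ih =>
        obtain ⟨ihL, ihv⟩ := ih
        obtain ⟨jL, jv⟩ := hint (u j) j
        have e : (ofInt fun a => ∑ i ∈ insert j s', u i * F i a) =
            tMul (ofInt fun a => u j * F j a) (ofInt fun a => ∑ i ∈ s', u i * F i a) := by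
          rw [tMul_ofInt]
          exact congrArg ofInt (funext fun a => Finset.sum_insert hj)
        rw [e]
        refine ⟨LGen.mul jL ihL, ?_⟩
        rw [hmul _ _ jL ihL]
        show ν (ofInt fun a => u j * F j a) b + ν (ofInt fun a => ∑ i ∈ s', u i * F i a) b = _
        rw [jv, ihv, Finset.sum_insert hj, ← WithBot.coe_add]
    exact key Finset.univ
  -- Step 5: tropical polynomials
  have hpoly : ∀ (s : Finset (Fin n → ℤ)) (hs : s.Nonempty),
      LGen F (ofInt fun a => s.sup' hs fun u => ∑ i, u i * F i a) ∧
        ν (ofInt fun a => s.sup' hs fun u => ∑ i, u i * F i a) b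
          = ((s.sup' hs fun u => ∑ i, u i * G i : ℤ) : WithBot ℤ) := by
    intro s hs
    induction hs using Finset.Nonempty.cons_induction with
    | singleton u =>
      simpa using hmon u
    | cons u s' hu hs' ih =>
      obtain ⟨ihL, ihv⟩ := ih
      obtain ⟨uL, uv⟩ := hmon u
      have e : (ofInt fun a => (Finset.cons u s' hu).sup' (Finset.cons_nonempty hu) fun v => ∑ i, v i * F i a) =
          tAdd (ofInt fun a => ∑ i, u i * F i a)
            (ofInt fun a => s'.sup' hs' fun v => ∑ i, v i * F i a) := by
        rw [tAdd_ofInt]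
        exact congrArg ofInt (funext fun a => Finset.sup'_cons hs' _)
      rw [e]
      refine ⟨LGen.add uL ihL, ?_⟩
      rw [hadd _ _ uL ihL]
      show ν (ofInt fun a => ∑ i, u i * F i a) b ⊔ _ = _
      rw [uv, ihv, Finset.sup'_cons, ← WithBot.coe_sup]
  -- Step 6: conclusion
  intro f g hf hg hfg
  obtain ⟨s, hs, hfs⟩ := hf
  obtain ⟨t, ht, hgt⟩ := hg
  have hkey : ∀ a : A, (s.sup' hs fun u => ∑ i, u i * F i a)
      = (t.sup' ht fun u => ∑ i, u i * F i a) := by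
    intro a
    have hmem : (fun i => (F i a : ℝ)) ∈ {x : Fin n → ℝ | x = 0 ∨
        ∃ (a : A) (t : ℝ), 0 ≤ t ∧ x = t • fun i => (F i a : ℝ)} :=
      Or.inr ⟨a, 1, zero_le_one, by simp⟩
    have hx := hfg _ hmem
    rw [hfs, hgt] at hx
    have cs : (s.sup' hs fun u => ∑ i, (u i : ℝ) * ((F i a : ℤ) : ℝ))
        = ((s.sup' hs fun u => ∑ i, u i * F i a : ℤ) : ℝ) := by
      rw [cast_sup']
      congr 1; funext u; push_cast; ring
    have ct : (t.sup' ht fun u => ∑ i, (u i : ℝ) * ((F i a : ℤ) : ℝ))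
        = ((t.sup' ht fun u => ∑ i, u i * F i a : ℤ) : ℝ) := by
      rw [cast_sup']
      congr 1; funext u; push_cast; ring
    rw [cs, ct] at hx
    exact_mod_cast hx
  have heqP : (ofInt fun a => s.sup' hs fun u => ∑ i, u i * F i a)
      = (ofInt fun a => t.sup' ht fun u => ∑ i, u i * F i a) :=
    congrArg ofInt (funext hkey)
  have hvs := (hpoly s hs).2
  have hvt := (hpoly t ht).2
  rw [heqP, hvt] at hvs
  have hZ : (s.sup' hs fun u => ∑ i, u i * G i) = (t.sup' ht fun u => ∑ i, u i * G i) := by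
    exact_mod_cast hvs.symm
  rw [hfs, hgt]
  have cs : (s.sup' hs fun u => ∑ i, (u i : ℝ) * ((G i : ℤ) : ℝ))
      = ((s.sup' hs fun u => ∑ i, u i * G i : ℤ) : ℝ) := by
    rw [cast_sup']; congr 1; funext u; push_cast; ring
  have ct : (t.sup' ht fun u => ∑ i, (u i : ℝ) * ((G i : ℤ) : ℝ))
      = ((t.sup' ht fun u => ∑ i, u i * G i : ℤ) : ℝ) := by
    rw [cast_sup']; congr 1; funext u; push_cast; ring
  rw [cs, ct, hZ]
end

section
/- Let A, B be finite sets, R the subsemiring of ℤ^A_pos ∪ {-∞} Laurent-generated by F₁,…,F_n ∈ ℤ^A_0, and ν : R → ℤ^B_pos ∪ {-∞} a semiring homomorphism. Then ν is geometric: for every b ∈ B there exist a ∈ A and a nonnegative rational t such that ν(Fᵢ)(b) = t·Fᵢ(a) for all i = 1,…,n. -/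
lemma sep_lemma {n : ℕ} (x mv : Fin n → ℤ)
    (h : ¬ ∃ t : ℚ, 0 ≤ t ∧ ∀ i, (mv i : ℚ) = t * x i) :
    ∃ k : Fin n → ℤ, 0 ≤ ∑ i, k i * x i ∧ ∑ i, k i * mv i < 0 := by
  have hmv : ∃ i, mv i ≠ 0 := by
    by_contra h0
    push_neg at h0
    exact h ⟨0, le_refl _, fun i => by simp [h0 i]⟩
  have he : 0 < ∑ i, mv i * mv i := by
    obtain ⟨i0, hi0⟩ := hmv
    refine Finset.sum_pos' (fun i _ => mul_self_nonneg _) ⟨i0, Finset.mem_univ _, ?_⟩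
    exact mul_self_pos.mpr hi0
  set c := ∑ i, mv i * x i with hc
  set d := ∑ i, x i * x i with hd
  by_cases hd0 : d = 0
  · -- x = 0
    have hx : ∀ i, x i = 0 := by
      intro i
      have h' := (Finset.sum_eq_zero_iff_of_nonneg (fun i (_ : i ∈ Finset.univ) => mul_self_nonneg (x i))).mp hd0 i (Finset.mem_univ i)
      nlinarith [h']
    refine ⟨fun i => -mv i, ?_, ?_⟩
    · simp [hx]
    · have : ∑ i, (-mv i) * mv i = -(∑ i, mv i * mv i) := by
        simp [neg_mul]
      rw [this]; linarith
  · have hdpos : 0 < d := by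
      rcases lt_or_eq_of_le (Finset.sum_nonneg (fun i _ => mul_self_nonneg (x i))) with h' | h'
      · exact h'
      · exact absurd h'.symm hd0
    by_cases hk0 : ∀ i, c * x i - d * mv i = 0
    · by_cases hc0 : 0 ≤ c
      · exfalso
        apply h
        refine ⟨(c : ℚ) / (d : ℚ), by positivity, fun i => ?_⟩
        have := hk0 i
        have hq : (c : ℚ) * x i - d * mv i = 0 := by exact_mod_cast this
        have hdq : (d : ℚ) ≠ 0 := by exact_mod_cast hd0
        field_simp
        linarith [hq]
      · push_neg at hc0
        refine ⟨fun i => -mv i, ?_, ?_⟩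
        · have : ∑ i, (-mv i) * x i = -c := by simp [neg_mul, hc]
          rw [this]; linarith
        · have : ∑ i, (-mv i) * mv i = -(∑ i, mv i * mv i) := by simp [neg_mul]
          rw [this]; linarith
    · push_neg at hk0
      obtain ⟨i1, hi1⟩ := hk0
      set k : Fin n → ℤ := fun i => c * x i - d * mv i with hk
      have h1 : ∑ i, k i * x i = 0 := by
        have : ∑ i, k i * x i = c * (∑ i, x i * x i) - d * (∑ i, mv i * x i) := by
          rw [Finset.mul_sum, Finset.mul_sum, ← Finset.sum_sub_distrib]
          exact Finset.sum_congr rfl (fun i _ => by simp [hk]; ring)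
        rw [this, ← hd, ← hc]; ring
      have h2 : ∑ i, k i * k i = -(d * (∑ i, k i * mv i)) := by
        have e1 : ∑ i, k i * k i = c * (∑ i, k i * x i) - d * (∑ i, k i * mv i) := by
          rw [Finset.mul_sum, Finset.mul_sum, ← Finset.sum_sub_distrib]
          exact Finset.sum_congr rfl (fun i _ => by simp only [hk]; ring)
        rw [e1, h1]; ring
      have h3 : 0 < ∑ i, k i * k i := by
        refine Finset.sum_pos' (fun i _ => mul_self_nonneg _) ⟨i1, Finset.mem_univ _, ?_⟩
        exact mul_self_pos.mpr hi1
      refine ⟨k, le_of_eq h1.symm, ?_⟩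
      nlinarith



/-- Main theorem: any semiring homomorphism `ν` from the subsemiring of
ℤ^A_pos ∪ {-∞} Laurent-generated by `F₁, …, F_n ∈ ℤ^A_0` to ℤ^B_pos ∪ {-∞}
is geometric: for every `b ∈ B` there are `a ∈ A` and a nonnegative rational
`t` with `ν(Fᵢ)(b) = t·Fᵢ(a)` for all `i`. -/
theorem stmt14 {A B : Type} [Fintype A] [Fintype B] {n : ℕ}
    (F : Fin n → A → ℤ) (hF : ∀ i, ∑ a, F i a = 0)
    (ν : (A → WithBot ℤ) → (B → WithBot ℤ)) (hν : IsHomOn F ν) :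
    ∀ b : B, ∃ (a : A) (t : ℚ), 0 ≤ t ∧
      ∀ i, ∃ m : ℤ, ν (ofInt (F i)) b = (m : WithBot ℤ) ∧ (m : ℚ) = t * F i a := by
  classical
  obtain ⟨hz, ho, hadd, hmul, hpos⟩ := hν
  intro b
  -- Step 1: the generators are units; extract integer values m i at b.
  have hunit : ∀ i, tMul (ofInt (F i)) (ofInt (-(F i))) = (tOne : A → WithBot ℤ) := by
    intro i; funext a
    show ((F i a : ℤ) : WithBot ℤ) + ((-(F i) a : ℤ) : WithBot ℤ) = ((0:ℤ) : WithBot ℤ)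
    rw [← WithBot.coe_add]; norm_num
  have hmex : ∀ i, ∃ mi : ℤ, ν (ofInt (F i)) b = (mi : WithBot ℤ) ∧
      ν (ofInt (-(F i))) b = ((-mi : ℤ) : WithBot ℤ) := by
    intro i
    have h1 := hmul (ofInt (F i)) (ofInt (-(F i))) (LGen.gen i) (LGen.inv i)
    rw [hunit i, ho] at h1
    have h2 : ν (ofInt (F i)) b + ν (ofInt (-(F i))) b = ((0:ℤ) : WithBot ℤ) := by
      have h3 := congrFun h1 b
      exact h3.symm
    have hPne : ν (ofInt (F i)) b ≠ ⊥ := by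
      intro hb; rw [hb] at h2; simp at h2
    have hQne : ν (ofInt (-(F i))) b ≠ ⊥ := by
      intro hb; rw [hb] at h2; simp at h2
    obtain ⟨p, hp⟩ := WithBot.ne_bot_iff_exists.mp hPne
    obtain ⟨q, hq⟩ := WithBot.ne_bot_iff_exists.mp hQne
    refine ⟨p, hp.symm, ?_⟩
    rw [← hp, ← hq, ← WithBot.coe_add] at h2
    have hpq : p + q = 0 := by exact_mod_cast h2
    rw [← hq]
    have : q = -p := by omega
    rw [this]
  choose m hm1 hm2 using hmex
  -- Step 2: integer multiples of a generator.
  have hsc : ∀ c : ℤ, ∀ i, LGen F (ofInt fun a => c * F i a) ∧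
      ν (ofInt fun a => c * F i a) b = ((c * m i : ℤ) : WithBot ℤ) := by
    intro c
    induction c using Int.induction_on with
    | zero =>
      intro i
      have e : (ofInt fun a => (0:ℤ) * F i a) = (tOne : A → WithBot ℤ) := by
        funext a; simp [ofInt, tOne]
      rw [e]
      refine ⟨LGen.one, ?_⟩
      rw [ho]; simp [tOne]
    | succ c ih =>
      intro i
      have e : (ofInt fun a => ((c:ℤ)+1) * F i a)
          = tMul (ofInt fun a => (c:ℤ) * F i a) (ofInt (F i)) := by
        funext a
        show (((((c:ℤ)+1) * F i a : ℤ)) : WithBot ℤ) = (((c:ℤ) * F i a : ℤ) : WithBot ℤ) + ((F i a : ℤ) : WithBot ℤ)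
        rw [← WithBot.coe_add]; congr 1; (try simp only [Pi.neg_apply]); push_cast; ring
      rw [e]
      refine ⟨LGen.mul (ih i).1 (LGen.gen i), ?_⟩
      rw [hmul _ _ (ih i).1 (LGen.gen i)]
      show ν (ofInt fun a => (c:ℤ) * F i a) b + ν (ofInt (F i)) b = _
      rw [(ih i).2, hm1 i, ← WithBot.coe_add]
      congr 1; (try simp only [Pi.neg_apply]); push_cast; ring
    | pred c ih =>
      intro i
      have e : (ofInt fun a => (-(c:ℤ)-1) * F i a)
          = tMul (ofInt fun a => (-(c:ℤ)) * F i a) (ofInt (-(F i))) := by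
        funext a
        show ((((-(c:ℤ)-1) * F i a : ℤ)) : WithBot ℤ) = (((-(c:ℤ)) * F i a : ℤ) : WithBot ℤ) + (((-(F i)) a : ℤ) : WithBot ℤ)
        rw [← WithBot.coe_add]; congr 1; (try simp only [Pi.neg_apply]); push_cast; ring
      rw [e]
      refine ⟨LGen.mul (ih i).1 (LGen.inv i), ?_⟩
      rw [hmul _ _ (ih i).1 (LGen.inv i)]
      show ν (ofInt fun a => (-(c:ℤ)) * F i a) b + ν (ofInt (-(F i))) b = _
      rw [(ih i).2, hm2 i, ← WithBot.coe_add]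
      congr 1; (try simp only [Pi.neg_apply]); push_cast; ring
  -- Step 3: integer linear combinations of the generators.
  have hlin : ∀ k : Fin n → ℤ,
      LGen F (ofInt fun a => ∑ i, k i * F i a) ∧
      ν (ofInt fun a => ∑ i, k i * F i a) b = ((∑ i, k i * m i : ℤ) : WithBot ℤ) := by
    intro k
    have H : ∀ s : Finset (Fin n),
        LGen F (ofInt fun a => ∑ i ∈ s, k i * F i a) ∧
        ν (ofInt fun a => ∑ i ∈ s, k i * F i a) b = ((∑ i ∈ s, k i * m i : ℤ) : WithBot ℤ) := by
      intro s
      induction s using Finset.induction_on with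
      | empty =>
        have e : (ofInt fun a => ∑ i ∈ (∅ : Finset (Fin n)), k i * F i a) = (tOne : A → WithBot ℤ) := by
          funext a; simp [ofInt, tOne]
        rw [e]
        refine ⟨LGen.one, ?_⟩
        rw [ho]; simp [tOne]
      | @insert j s hjs ih =>
        have e : (ofInt fun a => ∑ i ∈ insert j s, k i * F i a)
            = tMul (ofInt fun a => k j * F j a) (ofInt fun a => ∑ i ∈ s, k i * F i a) := by
          funext a
          show ((∑ i ∈ insert j s, k i * F i a : ℤ) : WithBot ℤ)
              = ((k j * F j a : ℤ) : WithBot ℤ) + ((∑ i ∈ s, k i * F i a : ℤ) : WithBot ℤ)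
          rw [← WithBot.coe_add, Finset.sum_insert hjs]
        rw [e]
        refine ⟨LGen.mul (hsc (k j) j).1 ih.1, ?_⟩
        rw [hmul _ _ (hsc (k j) j).1 ih.1]
        show ν (ofInt fun a => k j * F j a) b + ν (ofInt fun a => ∑ i ∈ s, k i * F i a) b = _
        rw [(hsc (k j) j).2, ih.2, ← WithBot.coe_add, Finset.sum_insert hjs]
    exact H Finset.univ
  -- Step 4: contradiction setup.
  by_contra hcon
  push_neg at hcon
  have hsep : ∀ a : A, ∃ k : Fin n → ℤ, 0 ≤ ∑ i, k i * F i a ∧ ∑ i, k i * m i < 0 := by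
    intro a
    apply sep_lemma (fun i => F i a) m
    rintro ⟨t, ht, hti⟩
    obtain ⟨i, hi⟩ := hcon a t ht
    exact hi (m i) (hm1 i) (hti i)
  choose κ hκ1 hκ2 using hsep
  -- Step 5: the sup element.
  have hsup : ∀ s : Finset A, ∃ E : A → WithBot ℤ, LGen F E ∧
      (∀ x, E x = s.sup fun a => ((∑ i, κ a i * F i x : ℤ) : WithBot ℤ)) ∧
      ν E b = s.sup fun a => ((∑ i, κ a i * m i : ℤ) : WithBot ℤ) := by
    intro s
    induction s using Finset.induction_on with
    | empty =>
      refine ⟨tZero, LGen.zero, fun x => by simp [tZero], ?_⟩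
      rw [hz]; simp [tZero]
    | @insert a s has ih =>
      obtain ⟨E, hEL, hEval, hEν⟩ := ih
      refine ⟨tAdd (ofInt fun x => ∑ i, κ a i * F i x) E,
        LGen.add (hlin (κ a)).1 hEL, fun x => ?_, ?_⟩
      · show ((∑ i, κ a i * F i x : ℤ) : WithBot ℤ) ⊔ E x = _
        rw [hEval x, Finset.sup_insert]
      · rw [hadd _ _ (hlin (κ a)).1 hEL]
        show ν (ofInt fun x => ∑ i, κ a i * F i x) b ⊔ ν E b = _
        rw [(hlin (κ a)).2, hEν, Finset.sup_insert]
  obtain ⟨E, hEL, hEval, hEν⟩ := hsup Finset.univ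
  -- Step 6: E ⊔ 1 = E since E ≥ 0 pointwise.
  have hone : tAdd E tOne = E := by
    funext x
    show E x ⊔ ((0:ℤ) : WithBot ℤ) = E x
    rw [sup_eq_left]
    rw [hEval x]
    calc ((0:ℤ) : WithBot ℤ) ≤ ((∑ i, κ x i * F i x : ℤ) : WithBot ℤ) := by
          exact_mod_cast hκ1 x
      _ ≤ _ := Finset.le_sup (f := fun a => ((∑ i, κ a i * F i x : ℤ) : WithBot ℤ)) (Finset.mem_univ x)
  have hEadd := hadd E tOne hEL LGen.one
  rw [hone, ho] at hEadd
  have hge : ((0:ℤ) : WithBot ℤ) ≤ ν E b := by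
    have h' := congrFun hEadd b
    calc ((0:ℤ) : WithBot ℤ) ≤ ν E b ⊔ ((0:ℤ) : WithBot ℤ) := le_sup_right
      _ = ν E b := h'.symm
  have hlt : ν E b < ((0:ℤ) : WithBot ℤ) := by
    rw [hEν]
    refine lt_of_le_of_lt (Finset.sup_le fun a _ => ?_) (by exact_mod_cast (by norm_num : (-1:ℤ) < 0) : ((-1:ℤ) : WithBot ℤ) < ((0:ℤ) : WithBot ℤ))
    exact_mod_cast (by linarith [hκ2 a] : ∑ i, κ a i * m i ≤ -1)
  exact absurd hlt (not_lt.mpr hge)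
end

section
/- Let A, B be finite sets, F₁,…,F_n ∈ ℤ^A_0, and R the subsemiring of ℤ^A_pos ∪ {-∞} Laurent-generated by {F₁,…,F_n}. Then the map sending a semiring homomorphism ν : R → ℤ^B_pos ∪ {-∞} to the tuple (ν(F₁),…,ν(F_n)) is a bijection onto the set of tuples (G₁,…,G_n) ∈ (ℤ^B_0)ⁿ such that for every b ∈ B there exist a ∈ A and nonnegative rational t with Gᵢ(b) = t·Fᵢ(a) for all i. -/
set_option linter.unusedSectionVars false
set_option maxHeartbeats 1000000

namespace S16

lemma dot_comb {n : ℕ} (x y : ℤ) (v w u : Fin n → ℤ) :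
    ∑ i, (x * v i - y * w i) * u i = x * ∑ i, v i * u i - y * ∑ i, w i * u i := by
  rw [Finset.mul_sum, Finset.mul_sum, ← Finset.sum_sub_distrib]
  exact Finset.sum_congr rfl (fun i _ => by ring)

lemma sq_sum_pos {n : ℕ} (v : Fin n → ℤ) (hv : v ≠ 0) : 0 < ∑ i, v i * v i := by
  rcases Function.ne_iff.mp hv with ⟨j, hj⟩
  exact Finset.sum_pos' (fun i _ => mul_self_nonneg _)
    ⟨j, Finset.mem_univ j, mul_self_pos.mpr hj⟩

lemma geom {n : ℕ} (v w : Fin n → ℤ)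
    (h : ¬ ∃ t : ℚ, 0 ≤ t ∧ ∀ i, (v i : ℚ) = t * w i) :
    ∃ c : Fin n → ℤ, 0 ≤ ∑ i, c i * w i ∧ ∑ i, c i * v i < 0 := by
  by_cases hw : w = 0
  · have hv : v ≠ 0 := by
      rintro rfl; exact h ⟨0, le_refl _, fun i => by simp⟩
    refine ⟨fun i => -(v i), by simp [hw], ?_⟩
    have h1 := sq_sum_pos v hv
    have h2 : ∑ i, (-(v i)) * v i = -∑ i, v i * v i := by
      rw [← Finset.sum_neg_distrib]; exact Finset.sum_congr rfl (fun i _ => by ring)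
    rw [h2]; omega
  · have hWpos : 0 < ∑ i, w i * w i := sq_sum_pos w hw
    by_cases hu : (fun i => (∑ j, w j * w j) * v i - (∑ j, v j * w j) * w i) = (0 : Fin n → ℤ)
    · have hvw : ∀ i, (∑ j, w j * w j) * v i = (∑ j, v j * w j) * w i := fun i => by
        have := congrFun hu i; simpa [sub_eq_zero] using this
      have hD0 : (∑ j, v j * w j) < 0 := by
        by_contra hD0
        push_neg at hD0
        apply h
        refine ⟨((∑ j, v j * w j : ℤ) : ℚ) / ((∑ j, w j * w j : ℤ) : ℚ), by positivity, fun i => ?_⟩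
        have hcast : ((∑ j, w j * w j : ℤ) : ℚ) * v i = ((∑ j, v j * w j : ℤ) : ℚ) * w i := by
          exact_mod_cast congrArg (Int.cast : ℤ → ℚ) (hvw i)
        have hWne : ((∑ j, w j * w j : ℤ) : ℚ) ≠ 0 := by positivity
        rw [div_mul_eq_mul_div, eq_div_iff hWne]
        linarith [hcast]
      refine ⟨w, le_of_lt hWpos, ?_⟩
      have : ∑ i, w i * v i = ∑ i, v i * w i :=
        Finset.sum_congr rfl (fun i _ => by ring)
      rw [this]; exact hD0
    · refine ⟨fun i => -((∑ j, w j * w j) * v i - (∑ j, v j * w j) * w i), ?_, ?_⟩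
      · have h2 : ∑ i, (-((∑ j, w j * w j) * v i - (∑ j, v j * w j) * w i)) * w i
            = -((∑ j, w j * w j) * ∑ i, v i * w i - (∑ j, v j * w j) * ∑ i, w i * w i) := by
          rw [← dot_comb]
          rw [← Finset.sum_neg_distrib]
          exact Finset.sum_congr rfl (fun i _ => by ring)
        rw [h2]; nlinarith [hWpos]
      · have hwv : ∑ i, w i * v i = ∑ i, v i * w i :=
          Finset.sum_congr rfl (fun i _ => by ring)
        have hupos : 0 < ∑ i, ((∑ j, w j * w j) * v i - (∑ j, v j * w j) * w i)
            * ((∑ j, w j * w j) * v i - (∑ j, v j * w j) * w i) := sq_sum_pos _ hu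
        have expand : ∑ i, ((∑ j, w j * w j) * v i - (∑ j, v j * w j) * w i)
            * ((∑ j, w j * w j) * v i - (∑ j, v j * w j) * w i)
            = (∑ j, w j * w j) * (∑ i, ((∑ j, w j * w j) * v i - (∑ j, v j * w j) * w i) * v i)
              - (∑ j, v j * w j) * (∑ i, ((∑ j, w j * w j) * v i - (∑ j, v j * w j) * w i) * w i) := by
          rw [Finset.mul_sum, Finset.mul_sum, ← Finset.sum_sub_distrib]
          exact Finset.sum_congr rfl (fun i _ => by ring)
        have hcw : ∑ i, ((∑ j, w j * w j) * v i - (∑ j, v j * w j) * w i) * w i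
            = (∑ j, w j * w j) * ∑ i, v i * w i - (∑ j, v j * w j) * ∑ i, w i * w i :=
          dot_comb _ _ _ _ _
        have hcw0 : ∑ i, ((∑ j, w j * w j) * v i - (∑ j, v j * w j) * w i) * w i = 0 := by
          rw [hcw]; ring
        have hfac : 0 < ∑ i, ((∑ j, w j * w j) * v i - (∑ j, v j * w j) * w i) * v i := by
          rw [expand, hcw0, mul_zero, sub_zero] at hupos
          by_contra hle
          push_neg at hle
          nlinarith [hWpos, hupos]
        have hneg : ∑ i, (-((∑ j, w j * w j) * v i - (∑ j, v j * w j) * w i)) * v i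
            = -∑ i, ((∑ j, w j * w j) * v i - (∑ j, v j * w j) * w i) * v i := by
          rw [← Finset.sum_neg_distrib]
          exact Finset.sum_congr rfl (fun i _ => by ring)
        rw [hneg]
        omega

lemma tMul_ofInt {A : Type} (f g : A → ℤ) : tMul (ofInt f) (ofInt g) = ofInt (fun a => f a + g a) := by
  funext a; simp [tMul, ofInt]

lemma tAdd_ofInt {A : Type} (f g : A → ℤ) : tAdd (ofInt f) (ofInt g) = ofInt (fun a => max (f a) (g a)) := by
  funext a; simp [tAdd, ofInt, WithBot.coe_max]

lemma ofInt_injective {A : Type} : Function.Injective (ofInt (A := A)) := by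
  intro f g h; funext a; have := congrFun h a; simpa [ofInt] using this

lemma ofInt_zero_eq_tOne {A : Type} : ofInt (fun _ : A => (0:ℤ)) = tOne := by
  funext a; simp [ofInt, tOne]

lemma tMul_tZero_left {A : Type} (P : A → WithBot ℤ) : tMul tZero P = tZero := by
  funext a; simp [tMul, tZero]

lemma tMul_tZero_right {A : Type} (P : A → WithBot ℤ) : tMul P tZero = tZero := by
  funext a; simp [tMul, tZero]

lemma tAdd_tZero_left {A : Type} (P : A → WithBot ℤ) : tAdd tZero P = P := by
  funext a; simp [tAdd, tZero]

lemma tAdd_tZero_right {A : Type} (P : A → WithBot ℤ) : tAdd P tZero = P := by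
  funext a; simp [tAdd, tZero]

section Hom
variable {A B : Type} [Fintype A] [Fintype B] {n : ℕ} {F : Fin n → A → ℤ}
  {ν : (A → WithBot ℤ) → (B → WithBot ℤ)}

lemma exists_gen_val (hν : IsHomOn F ν) (hB : Nonempty B) (i : Fin n) :
    ∃ g : B → ℤ, ν (ofInt (F i)) = ofInt g ∧ ν (ofInt (-(F i))) = ofInt (fun b => - g b)
      ∧ 0 ≤ ∑ b, g b ∧ 0 ≤ ∑ b, -(g b) := by
  obtain ⟨hz, ho, hadd, hmul, hpos⟩ := hν
  obtain ⟨b0⟩ := hB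
  have hprod : tMul (ofInt (F i)) (ofInt (-(F i))) = tOne := by
    rw [tMul_ofInt, ← ofInt_zero_eq_tOne]
    congr 1; funext a; simp
  have hkey : tMul (ν (ofInt (F i))) (ν (ofInt (-(F i)))) = tOne := by
    rw [← hmul _ _ (LGen.gen i) (LGen.inv i), hprod, ho]
  rcases hpos _ (LGen.gen i) with hg0 | ⟨g, hg, hgs⟩
  · exfalso
    rw [hg0] at hkey
    have := congrFun hkey b0
    simp [tMul, tZero, tOne] at this
  rcases hpos _ (LGen.inv i) with hg0 | ⟨g', hg', hgs'⟩
  · exfalso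
    rw [hg0, hg] at hkey
    have := congrFun hkey b0
    simp [tMul, tZero, tOne, ofInt] at this
  rw [hg, hg'] at hkey
  have hptw : ∀ b, g b + g' b = 0 := by
    intro b
    have := congrFun hkey b
    simp only [tMul, ofInt, tOne] at this
    exact_mod_cast this
  have hg'eq : g' = fun b => - g b := by
    funext b; have := hptw b; omega
  refine ⟨g, hg, by rw [hg', hg'eq], hgs, ?_⟩
  rw [hg'eq] at hgs'; simpa using hgs'

def Pair (F : Fin n → A → ℤ) (ν : (A → WithBot ℤ) → (B → WithBot ℤ))
    (p : A → ℤ) (q : B → ℤ) : Prop :=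
  LGen F (ofInt p) ∧ ν (ofInt p) = ofInt q

lemma Pair.congr {p p' : A → ℤ} {q q' : B → ℤ} (h : Pair F ν p q)
    (hp : p = p') (hq : q = q') : Pair F ν p' q' := hp ▸ hq ▸ h

lemma pair_one (hν : IsHomOn F ν) : Pair F ν (fun _ => 0) (fun _ => 0) :=
  ⟨ofInt_zero_eq_tOne ▸ LGen.one, by
    rw [ofInt_zero_eq_tOne, hν.2.1]; funext b; simp [tOne, ofInt]⟩

lemma pair_mul (hν : IsHomOn F ν) {p p' : A → ℤ} {q q' : B → ℤ}
    (h : Pair F ν p q) (h' : Pair F ν p' q') :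
    Pair F ν (fun a => p a + p' a) (fun b => q b + q' b) := by
  constructor
  · rw [← tMul_ofInt]; exact LGen.mul h.1 h'.1
  · rw [← tMul_ofInt, hν.2.2.2.1 _ _ h.1 h'.1, h.2, h'.2, tMul_ofInt]

lemma pair_add (hν : IsHomOn F ν) {p p' : A → ℤ} {q q' : B → ℤ}
    (h : Pair F ν p q) (h' : Pair F ν p' q') :
    Pair F ν (fun a => max (p a) (p' a)) (fun b => max (q b) (q' b)) := by
  constructor
  · rw [← tAdd_ofInt]; exact LGen.add h.1 h'.1
  · rw [← tAdd_ofInt, hν.2.2.1 _ _ h.1 h'.1, h.2, h'.2, tAdd_ofInt]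

lemma pair_smul (hν : IsHomOn F ν) {g : Fin n → B → ℤ}
    (hg : ∀ i, Pair F ν (F i) (g i) ∧ Pair F ν (-(F i)) (fun b => -(g i b)))
    (i : Fin n) (k : ℤ) :
    Pair F ν (fun a => k * F i a) (fun b => k * g i b) := by
  induction k using Int.induction_on with
  | zero => exact (pair_one hν).congr (by funext a; ring) (by funext b; ring)
  | succ m ih =>
      exact (pair_mul hν ih (hg i).1).congr (by funext a; push_cast; ring)
        (by funext b; push_cast; ring)
  | pred m ih =>
      exact (pair_mul hν ih (hg i).2).congr (by funext a; push_cast; simp; ring)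
        (by funext b; push_cast; ring)

lemma pair_mono (hν : IsHomOn F ν) {g : Fin n → B → ℤ}
    (hg : ∀ i, Pair F ν (F i) (g i) ∧ Pair F ν (-(F i)) (fun b => -(g i b)))
    (c : Fin n → ℤ) :
    Pair F ν (fun a => ∑ i, c i * F i a) (fun b => ∑ i, c i * g i b) := by
  have key : ∀ s : Finset (Fin n),
      Pair F ν (fun a => ∑ i ∈ s, c i * F i a) (fun b => ∑ i ∈ s, c i * g i b) := by
    intro s
    induction s using Finset.induction_on with
    | empty => exact (pair_one hν).congr (by funext a; simp) (by funext b; simp)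
    | insert _ _ hni ih =>
        exact (pair_mul hν (pair_smul hν hg _ _) ih).congr
          (by funext a; rw [Finset.sum_insert hni]) (by funext b; rw [Finset.sum_insert hni])
  exact key Finset.univ

lemma pair_sup {α : Type} (hν : IsHomOn F ν) {g : Fin n → B → ℤ}
    (hg : ∀ i, Pair F ν (F i) (g i) ∧ Pair F ν (-(F i)) (fun b => -(g i b)))
    (s : Finset α) (hs : s.Nonempty) (c : α → Fin n → ℤ) :
    Pair F ν (fun a => s.sup' hs (fun j => ∑ i, c j i * F i a))
      (fun b => s.sup' hs (fun j => ∑ i, c j i * g i b)) := by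
  induction hs using Finset.Nonempty.cons_induction with
  | singleton j =>
      exact (pair_mono hν hg (c j)).congr (by funext a; rw [Finset.sup'_singleton])
        (by funext b; rw [Finset.sup'_singleton])
  | cons j s hjs hsne ih =>
      exact (pair_add hν (pair_mono hν hg (c j)) ih).congr
        (by funext a; rw [Finset.sup'_cons]) (by funext b; rw [Finset.sup'_cons])

end Hom
lemma map_sup (f : ℤ → ℤ) (hf : Monotone f) (x y : WithBot ℤ) :
    WithBot.map f (x ⊔ y) = WithBot.map f x ⊔ WithBot.map f y := by
  cases x using WithBot.recBotCoe with
  | bot => simp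
  | coe xv =>
    cases y using WithBot.recBotCoe with
    | bot => simp
    | coe yv =>
      rw [← WithBot.coe_sup, WithBot.map_coe, WithBot.map_coe, WithBot.map_coe, ← WithBot.coe_sup]
      congr 1
      exact hf.map_sup xv yv

end S16

/-- The correspondence `ν ↦ (ν(F₁), …, ν(F_n))` is a bijection between semiring
homomorphisms from the subsemiring Laurent-generated by `F₁, …, F_n ∈ ℤ^A_0`
to ℤ^B_pos ∪ {-∞} and tuples `(G₁, …, G_n) ∈ (ℤ^B_0)ⁿ` satisfying the
geometric condition.  This is expressed by three clauses: the tuple of any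
homomorphism lies in the target set (well-definedness), homomorphisms agreeing
on the generators agree on the whole subsemiring (injectivity), and every
tuple in the target set is attained (surjectivity). -/
theorem stmt16 {A B : Type} [Fintype A] [Fintype B] {n : ℕ}
    (F : Fin n → A → ℤ) (hF : ∀ i, ∑ a, F i a = 0) :
    (∀ ν : (A → WithBot ℤ) → (B → WithBot ℤ), IsHomOn F ν →
        ∃ G : Fin n → B → ℤ, (∀ i, ν (ofInt (F i)) = ofInt (G i)) ∧
          (∀ i, ∑ b, G i b = 0) ∧
          ∀ b : B, ∃ (a : A) (t : ℚ), 0 ≤ t ∧ ∀ i, (G i b : ℚ) = t * F i a) ∧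
    (∀ ν ν' : (A → WithBot ℤ) → (B → WithBot ℤ), IsHomOn F ν → IsHomOn F ν' →
        (∀ i, ν (ofInt (F i)) = ν' (ofInt (F i))) →
        ∀ P, LGen F P → ν P = ν' P) ∧
    (∀ G : Fin n → B → ℤ, (∀ i, ∑ b, G i b = 0) →
        (∀ b : B, ∃ (a : A) (t : ℚ), 0 ≤ t ∧ ∀ i, (G i b : ℚ) = t * F i a) →
        ∃ ν : (A → WithBot ℤ) → (B → WithBot ℤ),
          IsHomOn F ν ∧ ∀ i, ν (ofInt (F i)) = ofInt (G i)) := by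
  classical
  refine ⟨?_, ?_, ?_⟩
  · -- Part 1: well-definedness
    intro ν hν
    rcases isEmpty_or_nonempty B with hB | hB
    · exact ⟨fun _ _ => 0, fun i => funext fun b => (hB.false b).elim,
        fun i => by simp, fun b => (hB.false b).elim⟩
    choose g hg1 hg2 hg3 hg4 using fun i => S16.exists_gen_val hν hB i
    refine ⟨g, hg1, ?_, ?_⟩
    · intro i
      have h4 := hg4 i
      rw [Finset.sum_neg_distrib] at h4
      have h3 := hg3 i
      omega
    · intro b0
      rcases isEmpty_or_nonempty A with hA | hA
      · exfalso
        have h01 : (tZero : A → WithBot ℤ) = tOne := funext fun a => (hA.false a).elim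
        have := congrFun (hν.1.symm.trans ((congrArg ν h01).trans hν.2.1)) b0
        simp [tZero, tOne] at this
      by_contra hcon
      have hgeo : ∀ a : A, ¬ ∃ t : ℚ, 0 ≤ t ∧ ∀ i, ((g i b0 : ℚ)) = t * F i a := by
        rintro a ⟨t, ht, hi⟩; exact hcon ⟨a, t, ht, hi⟩
      choose c hc1 hc2 using fun a => S16.geom (fun i => g i b0) (fun i => F i a) (hgeo a)
      have hpairs : ∀ i, S16.Pair F ν (F i) (g i) ∧ S16.Pair F ν (-(F i)) (fun b => -(g i b)) :=
        fun i => ⟨⟨LGen.gen i, hg1 i⟩, ⟨LGen.inv i, hg2 i⟩⟩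
      set v : Fin n → ℤ := fun i => g i b0 with hv
      set d : A → Fin n → ℤ := fun a i => v i + c a i with hd
      have P1 := S16.pair_mono hν hpairs v
      have P2 := S16.pair_sup hν hpairs Finset.univ Finset.univ_nonempty d
      have P3 := S16.pair_add hν P1 P2
      have habs : (fun a => max (∑ i, v i * F i a)
            (Finset.univ.sup' Finset.univ_nonempty (fun j => ∑ i, d j i * F i a)))
          = (fun a => Finset.univ.sup' Finset.univ_nonempty (fun j => ∑ i, d j i * F i a)) := by
        funext a
        apply max_eq_right
        refine le_trans ?_ (Finset.le_sup' _ (Finset.mem_univ a))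
        have hde : ∑ i, d a i * F i a = ∑ i, v i * F i a + ∑ i, c a i * F i a := by
          rw [← Finset.sum_add_distrib]
          exact Finset.sum_congr rfl (fun i _ => by rw [hd]; ring)
        rw [hde]
        linarith [hc1 a]
      have hBeq : (fun b => max (∑ i, v i * g i b)
            (Finset.univ.sup' Finset.univ_nonempty (fun j => ∑ i, d j i * g i b)))
          = (fun b => Finset.univ.sup' Finset.univ_nonempty (fun j => ∑ i, d j i * g i b)) := by
        apply S16.ofInt_injective
        rw [← P3.2, ← P2.2, habs]
      have hb0 := congrFun hBeq b0
      have hvv : ∑ i, v i * g i b0 = ∑ i, v i * v i :=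
        Finset.sum_congr rfl (fun i _ => by rw [hv])
      have hsup_lt : Finset.univ.sup' Finset.univ_nonempty (fun j => ∑ i, d j i * g i b0)
          < ∑ i, v i * v i := by
        rw [Finset.sup'_lt_iff]
        intro j _
        have hde : ∑ i, d j i * g i b0 = ∑ i, v i * v i + ∑ i, c j i * v i := by
          rw [← Finset.sum_add_distrib]
          exact Finset.sum_congr rfl (fun i _ => by rw [hd, hv]; ring)
        rw [hde]
        linarith [hc2 j]
      have hle := le_max_left (∑ i, v i * g i b0)
        (Finset.univ.sup' Finset.univ_nonempty (fun j => ∑ i, d j i * g i b0))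
      rw [hb0, hvv] at hle
      omega
  · -- Part 2: injectivity
    intro ν ν' hν hν' hgen P hP
    rcases isEmpty_or_nonempty B with hB | hB
    · funext b; exact (hB.false b).elim
    choose g hg1 hg2 _ _ using fun i => S16.exists_gen_val hν hB i
    choose g' hg1' hg2' _ _ using fun i => S16.exists_gen_val hν' hB i
    have hgg' : ∀ i, g i = g' i := fun i =>
      S16.ofInt_injective (by rw [← hg1, ← hg1', hgen i])
    induction hP with
    | gen i => exact hgen i
    | inv i => rw [hg2 i, hg2' i, hgg' i]
    | zero => rw [hν.1, hν'.1]
    | one => rw [hν.2.1, hν'.2.1]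
    | add hP hQ ihP ihQ =>
        rw [hν.2.2.1 _ _ hP hQ, hν'.2.2.1 _ _ hP hQ, ihP, ihQ]
    | mul hP hQ ihP ihQ =>
        rw [hν.2.2.2.1 _ _ hP hQ, hν'.2.2.2.1 _ _ hP hQ, ihP, ihQ]
  · -- Part 3: surjectivity
    intro G hGsum hGray
    choose a t ht hta using hGray
    set ν : (A → WithBot ℤ) → (B → WithBot ℤ) :=
      fun P b => WithBot.map (fun k : ℤ => ⌊t b * (k : ℚ)⌋) (P (a b)) with hνdef
    have hmono : ∀ b : B, Monotone (fun k : ℤ => ⌊t b * (k : ℚ)⌋) := by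
      intro b x y hxy
      apply Int.floor_le_floor
      exact mul_le_mul_of_nonneg_left (by exact_mod_cast hxy) (ht b)
    -- master structural lemma
    have key : ∀ P, LGen F P → P = tZero ∨ ∃ p : A → ℤ, P = ofInt p ∧
        (∀ b, ∃ m : ℤ, (m : ℚ) = t b * (p (a b) : ℚ)) ∧
        (0 : ℚ) ≤ ∑ b, t b * (p (a b) : ℚ) := by
      intro P hP
      induction hP with
      | gen i =>
          refine Or.inr ⟨F i, rfl, fun b => ⟨G i b, hta b i⟩, ?_⟩
          have he : ∑ b, t b * (F i (a b) : ℚ) = ∑ b, ((G i b : ℤ) : ℚ) :=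
            Finset.sum_congr rfl (fun b _ => (hta b i).symm)
          rw [he]
          have : ∑ b, ((G i b : ℤ) : ℚ) = ((∑ b, G i b : ℤ) : ℚ) := by push_cast; ring
          rw [this, hGsum i]
          simp
      | inv i =>
          refine Or.inr ⟨-(F i), rfl, fun b => ⟨-(G i b), ?_⟩, ?_⟩
          · rw [Pi.neg_apply]; push_cast; rw [hta b i]; ring
          · have he : ∑ b, t b * (((-(F i)) (a b) : ℤ) : ℚ) = ∑ b, -((G i b : ℤ) : ℚ) :=
              Finset.sum_congr rfl (fun b _ => by rw [Pi.neg_apply]; push_cast; rw [hta b i]; ring)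
            rw [he, Finset.sum_neg_distrib]
            have : ∑ b, ((G i b : ℤ) : ℚ) = ((∑ b, G i b : ℤ) : ℚ) := by push_cast; ring
            rw [this, hGsum i]
            simp
      | zero => exact Or.inl rfl
      | one =>
          refine Or.inr ⟨fun _ => 0, S16.ofInt_zero_eq_tOne.symm, fun b => ⟨0, by simp⟩, by simp⟩
      | add hP hQ ihP ihQ =>
          rcases ihP with rfl | ⟨p, rfl, hpint, hpsum⟩
          · rcases ihQ with rfl | ⟨q, rfl, hqint, hqsum⟩
            · exact Or.inl (S16.tAdd_tZero_left _)
            · rw [S16.tAdd_tZero_left]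
              exact Or.inr ⟨q, rfl, hqint, hqsum⟩
          · rcases ihQ with rfl | ⟨q, rfl, hqint, hqsum⟩
            · rw [S16.tAdd_tZero_right]
              exact Or.inr ⟨p, rfl, hpint, hpsum⟩
            · refine Or.inr ⟨fun x => max (p x) (q x), S16.tAdd_ofInt p q, ?_, ?_⟩
              · intro b
                obtain ⟨mp, hmp⟩ := hpint b
                obtain ⟨mq, hmq⟩ := hqint b
                refine ⟨max mp mq, ?_⟩
                push_cast
                rw [mul_max_of_nonneg _ _ (ht b), ← hmp, ← hmq]
              · refine le_trans hpsum (Finset.sum_le_sum fun b _ => ?_)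
                apply mul_le_mul_of_nonneg_left _ (ht b)
                exact_mod_cast le_max_left (p (a b)) (q (a b))
      | mul hP hQ ihP ihQ =>
          rcases ihP with rfl | ⟨p, rfl, hpint, hpsum⟩
          · exact Or.inl (S16.tMul_tZero_left _)
          · rcases ihQ with rfl | ⟨q, rfl, hqint, hqsum⟩
            · exact Or.inl (S16.tMul_tZero_right _)
            · refine Or.inr ⟨fun x => p x + q x, S16.tMul_ofInt p q, ?_, ?_⟩
              · intro b
                obtain ⟨mp, hmp⟩ := hpint b
                obtain ⟨mq, hmq⟩ := hqint b
                refine ⟨mp + mq, ?_⟩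
                push_cast
                rw [hmp, hmq]; ring
              · have he : ∑ b, t b * (((p (a b) + q (a b)) : ℤ) : ℚ)
                    = ∑ b, (t b * (p (a b) : ℚ) + t b * (q (a b) : ℚ)) :=
                  Finset.sum_congr rfl (fun b _ => by push_cast; ring)
                rw [he, Finset.sum_add_distrib]
                exact add_nonneg hpsum hqsum
    -- values on ofInt functions with integrality data
    have hval : ∀ (p : A → ℤ), ν (ofInt p) = fun b => ((⌊t b * (p (a b) : ℚ)⌋ : ℤ) : WithBot ℤ) := by
      intro p
      funext b
      rw [hνdef]
      simp [ofInt, WithBot.map_coe]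
    refine ⟨ν, ⟨?_, ?_, ?_, ?_, ?_⟩, ?_⟩
    · -- ν tZero = tZero
      funext b; rw [hνdef]; simp [tZero]
    · -- ν tOne = tOne
      funext b; rw [hνdef]; simp [tOne, WithBot.map_coe]
    · -- additivity (holds unconditionally)
      intro P Q _ _
      funext b
      rw [hνdef]
      show WithBot.map _ ((P (a b)) ⊔ (Q (a b))) = _
      rw [S16.map_sup _ (hmono b)]
      rfl
    · -- multiplicativity
      intro P Q hP hQ
      rcases key P hP with rfl | ⟨p, rfl, hpint, _⟩
      · rw [S16.tMul_tZero_left]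
        have hz : ν tZero = tZero := by funext b; rw [hνdef]; simp [tZero]
        rw [hz, S16.tMul_tZero_left]
      · rcases key Q hQ with rfl | ⟨q, rfl, hqint, _⟩
        · rw [S16.tMul_tZero_right]
          have hz : ν tZero = tZero := by funext b; rw [hνdef]; simp [tZero]
          rw [hz, S16.tMul_tZero_right]
        · rw [S16.tMul_ofInt, hval, hval p, hval q]
          funext b
          obtain ⟨mp, hmp⟩ := hpint b
          obtain ⟨mq, hmq⟩ := hqint b
          show ((⌊t b * ((p (a b) + q (a b) : ℤ) : ℚ)⌋ : ℤ) : WithBot ℤ) = _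
          have h1 : t b * ((p (a b) + q (a b) : ℤ) : ℚ) = ((mp + mq : ℤ) : ℚ) := by
            push_cast
            rw [mul_add, ← hmp, ← hmq]
          have h2 : t b * ((p (a b) : ℤ) : ℚ) = ((mp : ℤ) : ℚ) := hmp.symm
          have h3 : t b * ((q (a b) : ℤ) : ℚ) = ((mq : ℤ) : ℚ) := hmq.symm
          rw [h1, Int.floor_intCast]
          show _ = (((⌊t b * (p (a b) : ℚ)⌋ : ℤ) : WithBot ℤ) + ((⌊t b * (q (a b) : ℚ)⌋ : ℤ) : WithBot ℤ))
          rw [h2, h3, Int.floor_intCast, Int.floor_intCast]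
          exact_mod_cast rfl
    · -- maps into ZPos
      intro P hP
      simp only [ZPos, Set.mem_setOf_eq]
      rcases key P hP with rfl | ⟨p, rfl, hpint, hpsum⟩
      · exact Or.inl (by funext b; rw [hνdef]; simp [tZero])
      · refine Or.inr ⟨fun b => ⌊t b * (p (a b) : ℚ)⌋, hval p, ?_⟩
        have hfl : ∀ b, ((⌊t b * (p (a b) : ℚ)⌋ : ℤ) : ℚ) = t b * (p (a b) : ℚ) := by
          intro b
          obtain ⟨m, hm⟩ := hpint b
          rw [← hm, Int.floor_intCast]
        have : (0:ℚ) ≤ ∑ b, ((⌊t b * (p (a b) : ℚ)⌋ : ℤ) : ℚ) := by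
          rw [Finset.sum_congr rfl (fun b _ => hfl b)]
          exact hpsum
        exact_mod_cast this
    · -- values at generators
      intro i
      rw [hval (F i)]
      funext b
      show ((⌊t b * (F i (a b) : ℚ)⌋ : ℤ) : WithBot ℤ) = _
      rw [← hta b i, Int.floor_intCast]
      rfl
end
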